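/- arXiv:1212.0322 — 6 statements merged into one kernel-verified Lean document; each statement's English description precedes it below -/
import Mathlib

section
/- For N ≥ 2 and any N×N complex matrices A, B, C, D, the average over the real orthogonal group O(N) with respect to normalized Haar measure satisfies ⟨Tr(OᵗAOBOᵗCOD)⟩ = ((N+1)/(N(N−1)(N+2)))·[Tr(A)Tr(C)Tr(BD) + Tr(ACᵗ)Tr(BDᵗ) + Tr(AC)Tr(B)Tr(D)] − (1/(N(N−1)(N+2)))·[Tr(A)Tr(C)Tr(BDᵗ) + Tr(A)Tr(C)Tr(B)Tr(D) + Tr(ACᵗ)Tr(BD) + Tr(ACᵗ)Tr(B)Tr(D) + Tr(AC)Tr(BD) + Tr(AC)Tr(BDᵗ)]. -/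
open MeasureTheory Matrix

noncomputable instance (m n α : Type*) [MeasurableSpace α] : MeasurableSpace (Matrix m n α) :=
  (inferInstance : MeasurableSpace (m → n → α))

namespace OrthM
variable {N : ℕ}
abbrev Mat (N : ℕ) := Matrix (Fin N) (Fin N) ℝ

lemma meas_entry (i j : Fin N) : Measurable fun O : Mat N => O i j :=
  (measurable_pi_apply j).comp (measurable_pi_apply i)

lemma meas_mulLeft (S : Mat N) : Measurable fun O : Mat N => S * O := by
  apply measurable_pi_lambda
  intro a
  apply measurable_pi_lambda
  intro b
  simp only [Matrix.mul_apply]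
  exact Finset.measurable_sum _ fun c _ => ((meas_entry c b).const_mul _)

lemma entry_bound {O : Mat N} (h : Oᵀ * O = 1) (i j : Fin N) : |O i j| ≤ 1 := by
  have h1 : ∑ w, O w j * O w j = 1 := by
    have := congrFun (congrFun h j) j
    simpa [Matrix.mul_apply, Matrix.transpose_apply, Matrix.one_apply] using this
  have h2 : O i j * O i j ≤ 1 := by
    rw [← h1]
    exact Finset.single_le_sum (f := fun w => O w j * O w j)
      (fun w _ => mul_self_nonneg _) (Finset.mem_univ i)
  nlinarith [abs_nonneg (O i j), abs_mul_abs_self (O i j)]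

variable {μ : Measure (Mat N)}

lemma meas4 (i j k l p q r s : Fin N) :
    Measurable (fun O : Mat N => O i p * O j q * O k r * O l s) :=
  (((meas_entry i p).mul (meas_entry j q)).mul (meas_entry k r)).mul (meas_entry l s)

lemma integrable4 [IsProbabilityMeasure μ] (hmem : ∀ᵐ O ∂μ, Oᵀ * O = 1)
    (i j k l p q r s : Fin N) :
    Integrable (fun O : Mat N => O i p * O j q * O k r * O l s) μ := by
  refine Integrable.mono' (integrable_const 1) (meas4 i j k l p q r s).aestronglyMeasurable ?_
  filter_upwards [hmem] with O hO
  have b := entry_bound hO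
  have nn : ∀ a b : Fin N, (0:ℝ) ≤ |O a b| := fun a b => abs_nonneg _
  rw [Real.norm_eq_abs, abs_mul, abs_mul, abs_mul]
  nlinarith [b i p, b j q, b k r, b l s, nn i p, nn j q, nn k r, nn l s,
    mul_nonneg (nn i p) (nn j q), mul_nonneg (mul_nonneg (nn i p) (nn j q)) (nn k r)]

lemma integrable2 [IsProbabilityMeasure μ] (hmem : ∀ᵐ O ∂μ, Oᵀ * O = 1)
    (i j p q : Fin N) :
    Integrable (fun O : Mat N => O i p * O j q) μ := by
  refine Integrable.mono' (integrable_const 1)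
    ((meas_entry i p).mul (meas_entry j q)).aestronglyMeasurable ?_
  filter_upwards [hmem] with O hO
  have b := entry_bound hO
  rw [Real.norm_eq_abs, abs_mul]
  nlinarith [b i p, b j q, abs_nonneg (O i p), abs_nonneg (O j q)]

lemma int_inv (hinv : ∀ S : Mat N, Sᵀ * S = 1 → μ.map (fun O => S * O) = μ)
    {S : Mat N} (hS : Sᵀ * S = 1) {f : Mat N → ℝ} (hf : Measurable f) :
    ∫ O, f (S * O) ∂μ = ∫ O, f O ∂μ := by
  conv_rhs => rw [← hinv S hS]
  rw [integral_map (meas_mulLeft S).aemeasurable hf.aestronglyMeasurable]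


/-- sign flip matrix -/
def sgnM (r0 : Fin N) : Mat N := Matrix.diagonal (fun x => if x = r0 then (-1:ℝ) else 1)

lemma sgnM_orth (r0 : Fin N) : (sgnM r0)ᵀ * sgnM r0 = 1 := by
  rw [sgnM, Matrix.diagonal_transpose, Matrix.diagonal_mul_diagonal]
  have : (fun x : Fin N => (if x = r0 then (-1:ℝ) else 1) * (if x = r0 then (-1:ℝ) else 1))
      = fun _ => 1 := by
    funext x; split <;> norm_num
  rw [this, Matrix.diagonal_one]

lemma sgnM_mul (r0 : Fin N) (O : Mat N) (x c : Fin N) :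
    (sgnM r0 * O) x c = (if x = r0 then (-1:ℝ) else 1) * O x c := by
  rw [sgnM, Matrix.diagonal_mul]

/-- permutation matrix -/
def permM (σ : Equiv.Perm (Fin N)) : Mat N := Matrix.of fun x y => if y = σ x then (1:ℝ) else 0

lemma permM_orth (σ : Equiv.Perm (Fin N)) : (permM σ)ᵀ * permM σ = 1 := by
  ext a b
  simp only [Matrix.mul_apply, Matrix.transpose_apply, permM, Matrix.of_apply, Matrix.one_apply]
  rw [Finset.sum_eq_single (σ.symm a)]
  · simp only [Equiv.apply_symm_apply, if_pos rfl, one_mul]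
    simp [eq_comm]
  · intro x _ hx
    rw [if_neg, zero_mul]
    intro ha
    exact hx (by rw [ha]; simp)
  · simp

lemma permM_mul (σ : Equiv.Perm (Fin N)) (O : Mat N) (x c : Fin N) :
    (permM σ * O) x c = O (σ x) c := by
  simp only [Matrix.mul_apply, permM, Matrix.of_apply, ite_mul, one_mul, zero_mul]
  rw [Finset.sum_ite_eq' Finset.univ (σ x) (fun y => O y c)]
  simp


noncomputable def rc : ℝ := (Real.sqrt 2)⁻¹

lemma rc_sq : rc * rc = 1/2 := by
  rw [rc, ← mul_inv, Real.mul_self_sqrt (by norm_num)]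
  norm_num

noncomputable def rotM (u v : Fin N) : Mat N := Matrix.of fun x y =>
  if x = u then (if y = u then rc else if y = v then rc else 0)
  else if x = v then (if y = u then -rc else if y = v then rc else 0)
  else (if y = x then 1 else 0)

lemma sum_pair_support {u v : Fin N} (huv : u ≠ v) (f : Fin N → ℝ)
    (hf : ∀ x, x ≠ u → x ≠ v → f x = 0) : ∑ x, f x = f u + f v := by
  rw [show (Finset.univ : Finset (Fin N)) = ({u, v} : Finset (Fin N)) ∪ (Finset.univ \ {u, v}) by
    rw [Finset.union_sdiff_of_subset (Finset.subset_univ _)]]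
  rw [Finset.sum_union (Finset.disjoint_sdiff), Finset.sum_pair huv,
    Finset.sum_eq_zero, add_zero]
  intro x hx
  simp only [Finset.mem_sdiff, Finset.mem_insert, Finset.mem_singleton] at hx
  exact hf x (fun h => hx.2 (Or.inl h)) (fun h => hx.2 (Or.inr h))

lemma rotM_row_ne {u v a x : Fin N} (hxu : x ≠ u) (hxv : x ≠ v) (hax : a ≠ x) :
    rotM u v x a = 0 := by
  simp [rotM, hxu, hxv, hax]

lemma rotM_col_ne {u v a x : Fin N} (hau : a ≠ u) (hav : a ≠ v) (hxa : x ≠ a) :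
    rotM u v x a = 0 := by
  simp [rotM, hau, hav, Ne.symm hxa]

lemma rotM_orth {u v : Fin N} (huv : u ≠ v) : (rotM u v)ᵀ * rotM u v = 1 := by
  have hvu := huv.symm
  ext a b
  rw [Matrix.mul_apply]
  simp only [Matrix.transpose_apply]
  by_cases hau : a = u
  · subst hau
    by_cases hbu : b = a
    · subst hbu
      rw [sum_pair_support huv _ (fun x hxu hxv => by
        rw [rotM_row_ne hxu hxv (Ne.symm hxu), zero_mul])]
      simp [rotM, huv, hvu, Matrix.one_apply]
      nlinarith [rc_sq]
    · by_cases hbv : b = v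
      · subst hbv
        rw [sum_pair_support huv _ (fun x hxu hxv => by
          rw [rotM_row_ne hxu hxv (Ne.symm hxu), zero_mul])]
        simp [rotM, huv, hvu, Matrix.one_apply, fun h : a = b => hbu h.symm]
        try ring
      · rw [Finset.sum_eq_single b (fun x _ hx => by
          rw [rotM_col_ne (fun h => hbu h) hbv hx, mul_zero]) (by simp)]
        rw [rotM_row_ne hbu hbv (fun h => hbu h.symm), zero_mul,
          Matrix.one_apply, if_neg (fun h : a = b => hbu h.symm)]
  · by_cases hav : a = v
    · subst hav
      by_cases hbu : b = u
      · subst hbu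
        rw [sum_pair_support huv _ (fun x hxu hxv => by
          rw [rotM_row_ne hxu hxv (Ne.symm hxv), zero_mul])]
        simp [rotM, huv, hvu, Matrix.one_apply, fun h : a = b => hau (h ▸ rfl)]
        try ring
      · by_cases hbv : b = a
        · subst hbv
          rw [sum_pair_support huv _ (fun x hxu hxv => by
            rw [rotM_row_ne hxu hxv (Ne.symm hxv), zero_mul])]
          simp [rotM, huv, hvu, Matrix.one_apply]
          nlinarith [rc_sq]
        · rw [Finset.sum_eq_single b (fun x _ hx => by
            rw [rotM_col_ne hbu (fun h => hbv h) hx, mul_zero]) (by simp)]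
          rw [rotM_row_ne hbu (fun h => hbv h) (fun h => hbv h.symm), zero_mul,
            Matrix.one_apply, if_neg (fun h : a = b => hbv h.symm)]
    · rw [Finset.sum_eq_single a (fun x _ hx => by
        rw [rotM_col_ne hau hav hx, zero_mul]) (by simp)]
      have h1 : u ≠ a := fun h => hau h.symm
      have h2 : v ≠ a := fun h => hav h.symm
      simp [rotM, hau, hav, h1, h2, Matrix.one_apply, eq_comm]

lemma rotM_mul {u v : Fin N} (huv : u ≠ v) (O : Mat N) (x c : Fin N) :
    (rotM u v * O) x c =
      if x = u then rc * (O u c + O v c)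
      else if x = v then rc * (O v c - O u c)
      else O x c := by
  have hvu := huv.symm
  rw [Matrix.mul_apply]
  by_cases h1 : x = u
  · subst h1
    rw [if_pos rfl, sum_pair_support huv _ (fun y hyu hyv => by
      rw [rotM_col_ne hyu hyv (Ne.symm hyu), zero_mul])]
    simp [rotM, huv, hvu]
    ring
  · by_cases h2 : x = v
    · subst h2
      rw [if_neg h1, if_pos rfl, sum_pair_support huv _ (fun y hyu hyv => by
        rw [rotM_col_ne hyu hyv (Ne.symm hyv), zero_mul])]
      simp [rotM, h1, huv, hvu]
      ring
    · rw [if_neg h1, if_neg h2, Finset.sum_eq_single x (fun y _ hy => by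
        rw [rotM_row_ne h1 h2 hy, zero_mul]) (by simp)]
      simp [rotM, h1, h2]


noncomputable def I4 (μ : Measure (Mat N)) (i j k l p q r s : Fin N) : ℝ :=
  ∫ O, O i p * O j q * O k r * O l s ∂μ

variable {μ : Measure (Mat N)}

lemma I4_sign (hinv : ∀ S : Mat N, Sᵀ * S = 1 → μ.map (fun O => S * O) = μ)
    (r0 i j k l p q r s : Fin N) :
    I4 μ i j k l p q r s =
      ((if i = r0 then (-1:ℝ) else 1) * (if j = r0 then (-1:ℝ) else 1) *
       (if k = r0 then (-1:ℝ) else 1) * (if l = r0 then (-1:ℝ) else 1)) *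
        I4 μ i j k l p q r s := by
  have h := int_inv (μ := μ) hinv (sgnM_orth r0)
    (f := fun O => O i p * O j q * O k r * O l s) (meas4 i j k l p q r s)
  have h2 : (∫ O, (fun O : Mat N => O i p * O j q * O k r * O l s) (sgnM r0 * O) ∂μ)
      = ((if i = r0 then (-1:ℝ) else 1) * (if j = r0 then (-1:ℝ) else 1) *
         (if k = r0 then (-1:ℝ) else 1) * (if l = r0 then (-1:ℝ) else 1)) *
          I4 μ i j k l p q r s := by
    rw [I4, ← integral_const_mul]
    refine integral_congr_ae (Filter.Eventually.of_forall fun O => ?_)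
    simp only [sgnM_mul]
    ring
  calc I4 μ i j k l p q r s
      = ∫ O, (fun O : Mat N => O i p * O j q * O k r * O l s) O ∂μ := rfl
    _ = ∫ O, (fun O : Mat N => O i p * O j q * O k r * O l s) (sgnM r0 * O) ∂μ := h.symm
    _ = _ := h2

lemma I4_vanish₁ (hinv : ∀ S : Mat N, Sᵀ * S = 1 → μ.map (fun O => S * O) = μ)
    {i j k l : Fin N} (h1 : i ≠ j) (h2 : i ≠ k) (h3 : i ≠ l) (p q r s : Fin N) :
    I4 μ i j k l p q r s = 0 := by
  have h := I4_sign hinv i i j k l p q r s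
  rw [if_pos rfl, if_neg (Ne.symm h1), if_neg (Ne.symm h2), if_neg (Ne.symm h3)] at h
  have h' : I4 μ i j k l p q r s = -I4 μ i j k l p q r s := by linarith [h]
  linarith

lemma I4_vanish₂ (hinv : ∀ S : Mat N, Sᵀ * S = 1 → μ.map (fun O => S * O) = μ)
    {i j k l : Fin N} (h1 : j ≠ i) (h2 : j ≠ k) (h3 : j ≠ l) (p q r s : Fin N) :
    I4 μ i j k l p q r s = 0 := by
  have h := I4_sign hinv j i j k l p q r s
  rw [if_pos rfl, if_neg (Ne.symm h1), if_neg (Ne.symm h2), if_neg (Ne.symm h3)] at h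
  have h' : I4 μ i j k l p q r s = -I4 μ i j k l p q r s := by linarith [h]
  linarith

lemma I4_vanish₃ (hinv : ∀ S : Mat N, Sᵀ * S = 1 → μ.map (fun O => S * O) = μ)
    {i j k l : Fin N} (h1 : k ≠ i) (h2 : k ≠ j) (h3 : k ≠ l) (p q r s : Fin N) :
    I4 μ i j k l p q r s = 0 := by
  have h := I4_sign hinv k i j k l p q r s
  rw [if_pos rfl, if_neg (Ne.symm h1), if_neg (Ne.symm h2), if_neg (Ne.symm h3)] at h
  have h' : I4 μ i j k l p q r s = -I4 μ i j k l p q r s := by linarith [h]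
  linarith

lemma I4_vanish₄ (hinv : ∀ S : Mat N, Sᵀ * S = 1 → μ.map (fun O => S * O) = μ)
    {i j k l : Fin N} (h1 : l ≠ i) (h2 : l ≠ j) (h3 : l ≠ k) (p q r s : Fin N) :
    I4 μ i j k l p q r s = 0 := by
  have h := I4_sign hinv l i j k l p q r s
  rw [if_pos rfl, if_neg (Ne.symm h1), if_neg (Ne.symm h2), if_neg (Ne.symm h3)] at h
  have h' : I4 μ i j k l p q r s = -I4 μ i j k l p q r s := by linarith [h]
  linarith

lemma I4_perm (hinv : ∀ S : Mat N, Sᵀ * S = 1 → μ.map (fun O => S * O) = μ)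
    (σ : Equiv.Perm (Fin N)) (i j k l p q r s : Fin N) :
    I4 μ (σ i) (σ j) (σ k) (σ l) p q r s = I4 μ i j k l p q r s := by
  have h := int_inv (μ := μ) hinv (permM_orth σ)
    (f := fun O => O i p * O j q * O k r * O l s) (meas4 i j k l p q r s)
  rw [I4, I4, ← h]
  refine integral_congr_ae (Filter.Eventually.of_forall fun O => ?_)
  simp only [permM_mul]

lemma I2_val (hN : 2 ≤ N) [IsProbabilityMeasure μ] (hmem : ∀ᵐ O ∂μ, Oᵀ * O = 1)
    (hinv : ∀ S : Mat N, Sᵀ * S = 1 → μ.map (fun O => S * O) = μ)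
    (u p q : Fin N) :
    ∫ O, O u p * O u q ∂μ = (if p = q then 1 else 0) / N := by
  have hval : ∀ w : Fin N, ∫ O, O w p * O w q ∂μ = ∫ O, O u p * O u q ∂μ := by
    intro w
    have h := int_inv (μ := μ) hinv (permM_orth (Equiv.swap u w))
      (f := fun O => O u p * O u q) ((meas_entry u p).mul (meas_entry u q))
    rw [← h]
    refine integral_congr_ae (Filter.Eventually.of_forall fun O => ?_)
    simp only [permM_mul, Equiv.swap_apply_left]
  have hsum : ∑ w : Fin N, ∫ O, O w p * O w q ∂μ = (if p = q then 1 else 0) := by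
    rw [← integral_finset_sum _ (fun w _ => integrable2 hmem w w p q)]
    have hae : ∀ᵐ O ∂μ, (∑ w : Fin N, O w p * O w q) = (if p = q then (1:ℝ) else 0) := by
      filter_upwards [hmem] with O hO
      have := congrFun (congrFun hO p) q
      simpa [Matrix.mul_apply, Matrix.transpose_apply, Matrix.one_apply] using this
    rw [integral_congr_ae hae, integral_const]
    simp
  rw [Finset.sum_congr rfl (fun w _ => hval w), Finset.sum_const, Finset.card_univ,
    Fintype.card_fin, nsmul_eq_mul] at hsum
  have hN0 : (N:ℝ) ≠ 0 := Nat.cast_ne_zero.mpr (by omega)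
  rw [eq_div_iff hN0]
  linarith [hsum]

lemma I4_ring (μ : Measure (Mat N)) {i j k l p q r s i' j' k' l' p' q' r' s' : Fin N}
    (h : ∀ O : Mat N, O i p * O j q * O k r * O l s = O i' p' * O j' q' * O k' r' * O l' s') :
    I4 μ i j k l p q r s = I4 μ i' j' k' l' p' q' r' s' := by
  rw [I4, I4]
  exact integral_congr_ae (Filter.Eventually.of_forall fun O => h O)

lemma I4_dagger (hN : 2 ≤ N) [IsProbabilityMeasure μ] (hmem : ∀ᵐ O ∂μ, Oᵀ * O = 1)
    (hinv : ∀ S : Mat N, Sᵀ * S = 1 → μ.map (fun O => S * O) = μ)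
    {u v : Fin N} (huv : u ≠ v) (p q r s : Fin N) :
    I4 μ u u u u p q r s + ((N:ℝ) - 1) * I4 μ u u v v p q r s
      = (if p = q then 1 else 0) * (if r = s then 1 else 0) / N := by
  have key : ∑ w : Fin N, I4 μ w w v v p q r s
      = (if p = q then 1 else 0) * (if r = s then 1 else 0) / N := by
    calc ∑ w : Fin N, I4 μ w w v v p q r s
        = ∫ O, ∑ w : Fin N, O w p * O w q * O v r * O v s ∂μ :=
          (integral_finset_sum _ (fun w _ => integrable4 hmem w w v v p q r s)).symm
      _ = ∫ O, (if p = q then 1 else 0) * (O v r * O v s) ∂μ := by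
          refine integral_congr_ae ?_
          filter_upwards [hmem] with O hO
          have hcol : ∑ w : Fin N, O w p * O w q = (if p = q then (1:ℝ) else 0) := by
            have := congrFun (congrFun hO p) q
            simpa [Matrix.mul_apply, Matrix.transpose_apply, Matrix.one_apply] using this
          calc ∑ w : Fin N, O w p * O w q * O v r * O v s
              = (∑ w : Fin N, O w p * O w q) * (O v r * O v s) := by
                rw [Finset.sum_mul]
                exact Finset.sum_congr rfl fun w _ => by ring
            _ = (if p = q then 1 else 0) * (O v r * O v s) := by rw [hcol]
      _ = (if p = q then 1 else 0) * ∫ O, O v r * O v s ∂μ := integral_const_mul _ _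
      _ = (if p = q then 1 else 0) * (if r = s then 1 else 0) / N := by
          rw [I2_val hN hmem hinv v r s]; ring
  have hterm : ∀ w, w ≠ v → I4 μ w w v v p q r s = I4 μ u u v v p q r s := by
    intro w hw
    by_cases hwu : w = u
    · rw [hwu]
    · have h := I4_perm hinv (Equiv.swap u w) u u v v p q r s
      rw [Equiv.swap_apply_left,
        Equiv.swap_apply_of_ne_of_ne (Ne.symm huv) (Ne.symm hw)] at h
      exact h
  have hvv : I4 μ v v v v p q r s = I4 μ u u u u p q r s := by
    have h := I4_perm hinv (Equiv.swap u v) u u u u p q r s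
    rw [Equiv.swap_apply_left] at h
    exact h
  have hsplit : ∑ w : Fin N, I4 μ w w v v p q r s
      = I4 μ u u u u p q r s + ((N:ℝ) - 1) * I4 μ u u v v p q r s := by
    have hc : ∀ w ∈ (Finset.univ : Finset (Fin N)), I4 μ w w v v p q r s
        = (if w = v then I4 μ u u u u p q r s - I4 μ u u v v p q r s else 0)
          + I4 μ u u v v p q r s := by
      intro w _
      by_cases hw : w = v
      · subst hw; rw [if_pos rfl, hvv]; ring
      · rw [if_neg hw, hterm w hw]; ring
    rw [Finset.sum_congr rfl hc, Finset.sum_add_distrib,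
      Finset.sum_ite_eq' Finset.univ v
        (fun _ => I4 μ u u u u p q r s - I4 μ u u v v p q r s),
      Finset.sum_const, Finset.card_univ, Fintype.card_fin, nsmul_eq_mul]
    simp only [Finset.mem_univ, if_pos]
    ring
  linarith [key, hsplit]

lemma I4_rot [IsProbabilityMeasure μ] (hmem : ∀ᵐ O ∂μ, Oᵀ * O = 1)
    (hinv : ∀ S : Mat N, Sᵀ * S = 1 → μ.map (fun O => S * O) = μ)
    {u v : Fin N} (huv : u ≠ v) (p q r s : Fin N) :
    I4 μ u u u u p q r s
      = I4 μ u u v v p q r s + I4 μ u u v v p r q s + I4 μ u u v v p s q r := by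
  have hvu : v ≠ u := Ne.symm huv
  have h := int_inv (μ := μ) hinv (rotM_orth huv)
    (f := fun O => O u p * O u q * O v r * O v s) (meas4 u u v v p q r s)
  have step1 : I4 μ u u v v p q r s
      = ∫ O, (rc * (O u p + O v p)) * (rc * (O u q + O v q)) *
             (rc * (O v r - O u r)) * (rc * (O v s - O u s)) ∂μ := by
    calc I4 μ u u v v p q r s
        = ∫ O, (fun O : Mat N => O u p * O u q * O v r * O v s) O ∂μ := rfl
      _ = ∫ O, (fun O : Mat N => O u p * O u q * O v r * O v s) (rotM u v * O) ∂μ := h.symm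
      _ = _ := by
          refine integral_congr_ae (Filter.Eventually.of_forall fun O => ?_)
          simp [rotM_mul huv, hvu]
  have hexp : ∀ O : Mat N,
      (rc * (O u p + O v p)) * (rc * (O u q + O v q)) *
        (rc * (O v r - O u r)) * (rc * (O v s - O u s))
      = (1/4) * ∑ b : Bool × Bool × Bool × Bool,
          ((cond b.2.2.1 (-1:ℝ) 1 * cond b.2.2.2 (-1:ℝ) 1) *
            (O (cond b.1 u v) p * O (cond b.2.1 u v) q *
             O (cond b.2.2.1 u v) r * O (cond b.2.2.2 u v) s)) := by
    intro O
    rw [show (rc * (O u p + O v p)) * (rc * (O u q + O v q)) *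
          (rc * (O v r - O u r)) * (rc * (O v s - O u s))
        = ((rc * rc) * (rc * rc)) * ((O u p + O v p) * (O u q + O v q) *
            (O v r - O u r) * (O v s - O u s)) from by ring, rc_sq]
    simp only [Fintype.sum_prod_type, Fintype.sum_bool, Bool.cond_true, Bool.cond_false]
    ring
  have hint : I4 μ u u v v p q r s
      = (1/4) * ∑ b : Bool × Bool × Bool × Bool,
          ((cond b.2.2.1 (-1:ℝ) 1 * cond b.2.2.2 (-1:ℝ) 1) *
            I4 μ (cond b.1 u v) (cond b.2.1 u v) (cond b.2.2.1 u v) (cond b.2.2.2 u v)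
              p q r s) := by
    rw [step1, integral_congr_ae (Filter.Eventually.of_forall hexp), integral_const_mul,
      integral_finset_sum _ (fun b _ => (integrable4 hmem _ _ _ _ p q r s).const_mul _)]
    congr 1
    refine Finset.sum_congr rfl fun b _ => ?_
    rw [integral_const_mul]
    rfl
  -- evaluate the 16 terms
  have e1 : I4 μ u u u v p q r s = 0 := I4_vanish₄ hinv hvu hvu hvu p q r s
  have e2 : I4 μ u u v u p q r s = 0 := I4_vanish₃ hinv hvu hvu hvu p q r s
  have e3 : I4 μ u v u u p q r s = 0 := I4_vanish₂ hinv hvu hvu hvu p q r s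
  have e4 : I4 μ v u u u p q r s = 0 := I4_vanish₁ hinv hvu hvu hvu p q r s
  have e5 : I4 μ u v v v p q r s = 0 := I4_vanish₁ hinv huv huv huv p q r s
  have e6 : I4 μ v u v v p q r s = 0 := I4_vanish₂ hinv huv huv huv p q r s
  have e7 : I4 μ v v u v p q r s = 0 := I4_vanish₃ hinv huv huv huv p q r s
  have e8 : I4 μ v v v u p q r s = 0 := I4_vanish₄ hinv huv huv huv p q r s
  have e9 : I4 μ v v v v p q r s = I4 μ u u u u p q r s := by
    have h' := I4_perm hinv (Equiv.swap u v) u u u u p q r s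
    rw [Equiv.swap_apply_left] at h'
    exact h'
  have e10 : I4 μ v v u u p q r s = I4 μ u u v v p q r s := by
    have h' := I4_perm hinv (Equiv.swap u v) u u v v p q r s
    rw [Equiv.swap_apply_left, Equiv.swap_apply_right] at h'
    exact h'
  have e11 : I4 μ u v u v p q r s = I4 μ u u v v p r q s :=
    I4_ring μ (fun O => by ring)
  have e12 : I4 μ u v v u p q r s = I4 μ u u v v p s q r :=
    I4_ring μ (fun O => by ring)
  have e13 : I4 μ v u u v p q r s = I4 μ u u v v p s q r := by
    have c1 : I4 μ v u u v p q r s = I4 μ u u v v q r p s :=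
      I4_ring μ (fun O => by ring)
    have c2 := I4_perm hinv (Equiv.swap u v) u u v v q r p s
    rw [Equiv.swap_apply_left, Equiv.swap_apply_right] at c2
    have c3 : I4 μ v v u u q r p s = I4 μ u u v v p s q r :=
      I4_ring μ (fun O => by ring)
    rw [c1, ← c2, c3]
  have e14 : I4 μ v u v u p q r s = I4 μ u u v v p r q s := by
    have c1 : I4 μ v u v u p q r s = I4 μ u u v v q s p r :=
      I4_ring μ (fun O => by ring)
    have c2 := I4_perm hinv (Equiv.swap u v) u u v v q s p r
    rw [Equiv.swap_apply_left, Equiv.swap_apply_right] at c2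
    have c3 : I4 μ v v u u q s p r = I4 μ u u v v p r q s :=
      I4_ring μ (fun O => by ring)
    rw [c1, ← c2, c3]
  have hsum : ∑ b : Bool × Bool × Bool × Bool,
      ((cond b.2.2.1 (-1:ℝ) 1 * cond b.2.2.2 (-1:ℝ) 1) *
        I4 μ (cond b.1 u v) (cond b.2.1 u v) (cond b.2.2.1 u v) (cond b.2.2.2 u v)
          p q r s)
      = 2 * I4 μ u u u u p q r s + 2 * I4 μ u u v v p q r s
        - 2 * I4 μ u u v v p r q s - 2 * I4 μ u u v v p s q r := by
    simp only [Fintype.sum_prod_type, Fintype.sum_bool, Bool.cond_true, Bool.cond_false]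
    rw [e1, e2, e3, e4, e5, e6, e7, e8, e9, e10, e11, e12, e13, e14]
    ring
  rw [hsum] at hint
  linarith [hint]

lemma I4_pair (hN : 2 ≤ N) [IsProbabilityMeasure μ] (hmem : ∀ᵐ O ∂μ, Oᵀ * O = 1)
    (hinv : ∀ S : Mat N, Sᵀ * S = 1 → μ.map (fun O => S * O) = μ)
    {u v : Fin N} (huv : u ≠ v) (p q r s : Fin N) :
    I4 μ u u v v p q r s
      = (((N:ℝ) + 1) * ((if p = q then 1 else 0) * (if r = s then 1 else 0))
          - (if p = r then 1 else 0) * (if q = s then 1 else 0)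
          - (if p = s then 1 else 0) * (if q = r then 1 else 0))
        / ((N:ℝ) * ((N:ℝ) - 1) * ((N:ℝ) + 2)) := by
  have hn : (2:ℝ) ≤ (N:ℝ) := by exact_mod_cast hN
  have hne1 : (N:ℝ) ≠ 0 := by linarith
  have hne2 : (N:ℝ) - 1 ≠ 0 := by linarith
  have hne3 : (N:ℝ) + 2 ≠ 0 := by linarith
  have d1 := I4_dagger hN hmem hinv huv p q r s
  have d2 := I4_dagger hN hmem hinv huv p r q s
  have d3 := I4_dagger hN hmem hinv huv p s q r
  have r1 := I4_rot hmem hinv huv p q r s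
  have r2 := I4_rot hmem hinv huv p r q s
  have r3 := I4_rot hmem hinv huv p s q r
  have c1 : I4 μ u u v v p s r q = I4 μ u u v v p s q r := I4_ring μ (fun O => by ring)
  have c2 : I4 μ u u v v p q s r = I4 μ u u v v p q r s := I4_ring μ (fun O => by ring)
  have c3 : I4 μ u u v v p r s q = I4 μ u u v v p r q s := I4_ring μ (fun O => by ring)
  rw [c1] at r2
  rw [c2, c3] at r3
  have d1' : (N:ℝ) * (I4 μ u u u u p q r s + ((N:ℝ) - 1) * I4 μ u u v v p q r s)
      = (if p = q then 1 else 0) * (if r = s then 1 else 0) := by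
    rw [d1]; field_simp
  have d2' : (N:ℝ) * (I4 μ u u u u p r q s + ((N:ℝ) - 1) * I4 μ u u v v p r q s)
      = (if p = r then 1 else 0) * (if q = s then 1 else 0) := by
    rw [d2]; field_simp
  have d3' : (N:ℝ) * (I4 μ u u u u p s q r + ((N:ℝ) - 1) * I4 μ u u v v p s q r)
      = (if p = s then 1 else 0) * (if q = r then 1 else 0) := by
    rw [d3]; field_simp
  have E1 : (N:ℝ) * ((N:ℝ) * I4 μ u u v v p q r s + I4 μ u u v v p r q s
      + I4 μ u u v v p s q r)
      = (if p = q then 1 else 0) * (if r = s then 1 else 0) := by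
    linear_combination d1' - (N:ℝ) * r1
  have E2 : (N:ℝ) * ((N:ℝ) * I4 μ u u v v p r q s + I4 μ u u v v p q r s
      + I4 μ u u v v p s q r)
      = (if p = r then 1 else 0) * (if q = s then 1 else 0) := by
    linear_combination d2' - (N:ℝ) * r2
  have E3 : (N:ℝ) * ((N:ℝ) * I4 μ u u v v p s q r + I4 μ u u v v p q r s
      + I4 μ u u v v p r q s)
      = (if p = s then 1 else 0) * (if q = r then 1 else 0) := by
    linear_combination d3' - (N:ℝ) * r3
  rw [eq_div_iff (mul_ne_zero (mul_ne_zero hne1 hne2) hne3)]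
  linear_combination ((N:ℝ) + 1) * E1 - E2 - E3

noncomputable def Fw (N : ℕ) (p q r s : Fin N) : ℝ :=
  (((N:ℝ) + 1) * ((if p = q then 1 else 0) * (if r = s then 1 else 0))
      - (if p = r then 1 else 0) * (if q = s then 1 else 0)
      - (if p = s then 1 else 0) * (if q = r then 1 else 0))
    / ((N:ℝ) * ((N:ℝ) - 1) * ((N:ℝ) + 2))

lemma I4_master (hN : 2 ≤ N) [IsProbabilityMeasure μ] (hmem : ∀ᵐ O ∂μ, Oᵀ * O = 1)
    (hinv : ∀ S : Mat N, Sᵀ * S = 1 → μ.map (fun O => S * O) = μ)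
    (i j k l p q r s : Fin N) :
    I4 μ i j k l p q r s
      = (if i = j then 1 else 0) * (if k = l then 1 else 0) * Fw N p q r s
        + (if i = k then 1 else 0) * (if j = l then 1 else 0) * Fw N p r q s
        + (if i = l then 1 else 0) * (if j = k then 1 else 0) * Fw N p s q r := by
  have : Nontrivial (Fin N) := Fin.nontrivial_iff_two_le.mpr hN
  have pair : ∀ (u v : Fin N), u ≠ v → ∀ p' q' r' s' : Fin N,
      I4 μ u u v v p' q' r' s' = Fw N p' q' r' s' :=
    fun u v huv p' q' r' s' => I4_pair hN hmem hinv huv p' q' r' s'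
  by_cases hij : i = j
  · subst hij
    by_cases hkl : k = l
    · subst hkl
      by_cases hik : i = k
      · subst hik
        obtain ⟨v', hv'⟩ := exists_ne i
        rw [I4_rot hmem hinv (Ne.symm hv'), pair i v' (Ne.symm hv') p q r s,
          pair i v' (Ne.symm hv') p r q s, pair i v' (Ne.symm hv') p s q r]
        simp
      · rw [pair i k hik p q r s]
        simp [hik]
    · have hz : I4 μ i i k l p q r s = 0 := by
        by_cases hki : k = i
        · subst hki
          exact I4_vanish₄ hinv (fun h => hkl h.symm) (fun h => hkl h.symm)
            (fun h => hkl h.symm) p q r s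
        · exact I4_vanish₃ hinv hki hki hkl p q r s
      rw [hz]
      by_cases hik : i = k
      · have hil : i ≠ l := fun h => hkl (hik.symm.trans h)
        simp [hkl, hil]
      · simp [hkl, hik]
  · by_cases hik : i = k
    · subst hik
      by_cases hjl : j = l
      · subst hjl
        have hre : I4 μ i j i j p q r s = I4 μ i i j j p r q s :=
          I4_ring μ (fun O => by ring)
        rw [hre, pair i j hij p r q s]
        simp [hij, Ne.symm hij]
      · have hz : I4 μ i j i l p q r s = 0 :=
          I4_vanish₂ hinv (Ne.symm hij) (Ne.symm hij) hjl p q r s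
        rw [hz]
        simp [hij, hjl, Ne.symm hij]
    · by_cases hil : i = l
      · subst hil
        by_cases hjk : j = k
        · subst hjk
          have hre : I4 μ i j j i p q r s = I4 μ i i j j p s q r :=
            I4_ring μ (fun O => by ring)
          rw [hre, pair i j hij p s q r]
          simp [hij, Ne.symm hij, hik]
        · have hz : I4 μ i j k i p q r s = 0 :=
            I4_vanish₂ hinv (Ne.symm hij) hjk (Ne.symm hij) p q r s
          rw [hz]
          simp [hij, hjk, hik]
      · have hz : I4 μ i j k l p q r s = 0 :=
          I4_vanish₁ hinv hij hik hil p q r s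
        rw [hz]
        simp [hij, hik, hil]

lemma R1 (A C : Matrix (Fin N) (Fin N) ℂ) :
    ∑ y : Fin N × Fin N × Fin N × Fin N,
      A y.1 y.2.1 * C y.2.2.1 y.2.2.2 *
        ((if y.1 = y.2.1 then (1:ℂ) else 0) * (if y.2.2.1 = y.2.2.2 then (1:ℂ) else 0))
    = A.trace * C.trace := by
  simp only [Fintype.sum_prod_type, Matrix.trace, Matrix.diag, mul_ite, ite_mul, mul_zero,
    zero_mul, mul_one, one_mul, Finset.sum_ite_irrel, Finset.sum_const_zero,
    Finset.sum_ite_eq, Finset.sum_ite_eq', Finset.mem_univ, if_true,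
    ← Finset.sum_mul, ← Finset.mul_sum]

lemma R2 (A C : Matrix (Fin N) (Fin N) ℂ) :
    ∑ y : Fin N × Fin N × Fin N × Fin N,
      A y.1 y.2.1 * C y.2.2.1 y.2.2.2 *
        ((if y.1 = y.2.2.1 then (1:ℂ) else 0) * (if y.2.1 = y.2.2.2 then (1:ℂ) else 0))
    = (A * Cᵀ).trace := by
  simp only [Fintype.sum_prod_type, Matrix.trace, Matrix.diag, Matrix.mul_apply,
    Matrix.transpose_apply, mul_ite, ite_mul, mul_zero,
    zero_mul, mul_one, one_mul, Finset.sum_ite_irrel, Finset.sum_const_zero,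
    Finset.sum_ite_eq, Finset.sum_ite_eq', Finset.mem_univ, if_true,
    ← Finset.sum_mul, ← Finset.mul_sum]

lemma R3 (A C : Matrix (Fin N) (Fin N) ℂ) :
    ∑ y : Fin N × Fin N × Fin N × Fin N,
      A y.1 y.2.1 * C y.2.2.1 y.2.2.2 *
        ((if y.1 = y.2.2.2 then (1:ℂ) else 0) * (if y.2.1 = y.2.2.1 then (1:ℂ) else 0))
    = (A * C).trace := by
  simp only [Fintype.sum_prod_type, Matrix.trace, Matrix.diag, Matrix.mul_apply,
    mul_ite, ite_mul, mul_zero,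
    zero_mul, mul_one, one_mul, Finset.sum_ite_irrel, Finset.sum_const_zero,
    Finset.sum_ite_eq, Finset.sum_ite_eq', Finset.mem_univ, if_true,
    ← Finset.sum_mul, ← Finset.mul_sum]

lemma S1 (B D : Matrix (Fin N) (Fin N) ℂ) :
    ∑ y : Fin N × Fin N × Fin N × Fin N,
      B y.2.1 y.2.2.1 * D y.2.2.2 y.1 *
        ((if y.1 = y.2.1 then (1:ℂ) else 0) * (if y.2.2.1 = y.2.2.2 then (1:ℂ) else 0))
    = (B * D).trace := by
  simp only [Fintype.sum_prod_type, Matrix.trace, Matrix.diag, Matrix.mul_apply,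
    mul_ite, ite_mul, mul_zero, zero_mul, mul_one, one_mul, Finset.sum_ite_irrel,
    Finset.sum_const_zero, Finset.sum_ite_eq, Finset.sum_ite_eq', Finset.mem_univ, if_true,
    ← Finset.sum_mul, ← Finset.mul_sum]

lemma S2 (B D : Matrix (Fin N) (Fin N) ℂ) :
    ∑ y : Fin N × Fin N × Fin N × Fin N,
      B y.2.1 y.2.2.1 * D y.2.2.2 y.1 *
        ((if y.1 = y.2.2.1 then (1:ℂ) else 0) * (if y.2.1 = y.2.2.2 then (1:ℂ) else 0))
    = (B * Dᵀ).trace := by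
  simp only [Fintype.sum_prod_type, Matrix.trace, Matrix.diag, Matrix.mul_apply,
    Matrix.transpose_apply, mul_ite, ite_mul, mul_zero, zero_mul, mul_one, one_mul,
    Finset.sum_ite_irrel, Finset.sum_const_zero, Finset.sum_ite_eq, Finset.sum_ite_eq',
    Finset.mem_univ, if_true, ← Finset.sum_mul, ← Finset.mul_sum]
  exact Finset.sum_comm

lemma S3 (B D : Matrix (Fin N) (Fin N) ℂ) :
    ∑ y : Fin N × Fin N × Fin N × Fin N,
      B y.2.1 y.2.2.1 * D y.2.2.2 y.1 *
        ((if y.1 = y.2.2.2 then (1:ℂ) else 0) * (if y.2.1 = y.2.2.1 then (1:ℂ) else 0))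
    = B.trace * D.trace := by
  simp only [Fintype.sum_prod_type, Matrix.trace, Matrix.diag, Matrix.mul_apply,
    mul_ite, ite_mul, mul_zero, zero_mul, mul_one, one_mul, Finset.sum_ite_irrel,
    Finset.sum_const_zero, Finset.sum_ite_eq, Finset.sum_ite_eq', Finset.mem_univ, if_true,
    ← Finset.sum_mul, ← Finset.mul_sum]

lemma S1b (B D : Matrix (Fin N) (Fin N) ℂ) :
    ∑ y : Fin N × Fin N × Fin N × Fin N,
      B y.2.1 y.2.2.1 * D y.2.2.2 y.1 *
        ((if y.1 = y.2.1 then (1:ℂ) else 0) * (if y.2.2.2 = y.2.2.1 then (1:ℂ) else 0))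
    = (B * D).trace := by
  simp only [Fintype.sum_prod_type, Matrix.trace, Matrix.diag, Matrix.mul_apply,
    mul_ite, ite_mul, mul_zero, zero_mul, mul_one, one_mul, Finset.sum_ite_irrel,
    Finset.sum_const_zero, Finset.sum_ite_eq, Finset.sum_ite_eq', Finset.mem_univ, if_true,
    ← Finset.sum_mul, ← Finset.mul_sum]

lemma S2b (B D : Matrix (Fin N) (Fin N) ℂ) :
    ∑ y : Fin N × Fin N × Fin N × Fin N,
      B y.2.1 y.2.2.1 * D y.2.2.2 y.1 *
        ((if y.1 = y.2.2.1 then (1:ℂ) else 0) * (if y.2.2.2 = y.2.1 then (1:ℂ) else 0))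
    = (B * Dᵀ).trace := by
  simp only [Fintype.sum_prod_type, Matrix.trace, Matrix.diag, Matrix.mul_apply,
    Matrix.transpose_apply, mul_ite, ite_mul, mul_zero, zero_mul, mul_one, one_mul,
    Finset.sum_ite_irrel, Finset.sum_const_zero, Finset.sum_ite_eq, Finset.sum_ite_eq',
    Finset.mem_univ, if_true, ← Finset.sum_mul, ← Finset.mul_sum]
  exact Finset.sum_comm

lemma S3b (B D : Matrix (Fin N) (Fin N) ℂ) :
    ∑ y : Fin N × Fin N × Fin N × Fin N,
      B y.2.1 y.2.2.1 * D y.2.2.2 y.1 *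
        ((if y.1 = y.2.2.2 then (1:ℂ) else 0) * (if y.2.2.1 = y.2.1 then (1:ℂ) else 0))
    = B.trace * D.trace := by
  simp only [Fintype.sum_prod_type, Matrix.trace, Matrix.diag, Matrix.mul_apply,
    mul_ite, ite_mul, mul_zero, zero_mul, mul_one, one_mul, Finset.sum_ite_irrel,
    Finset.sum_const_zero, Finset.sum_ite_eq, Finset.sum_ite_eq', Finset.mem_univ, if_true,
    ← Finset.sum_mul, ← Finset.mul_sum]

noncomputable def Gc (n e : ℂ) {N : ℕ} (p q r s : Fin N) : ℂ :=
  ((n + 1) * ((if p = q then (1:ℂ) else 0) * (if r = s then 1 else 0))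
    - (if p = r then (1:ℂ) else 0) * (if q = s then 1 else 0)
    - (if p = s then (1:ℂ) else 0) * (if q = r then 1 else 0)) * e

lemma colsum1 (B D : Matrix (Fin N) (Fin N) ℂ) (n e : ℂ) :
    ∑ y : Fin N × Fin N × Fin N × Fin N,
      B y.2.1 y.2.2.1 * D y.2.2.2 y.1 * Gc n e y.1 y.2.1 y.2.2.1 y.2.2.2
    = ((n + 1) * (B * D).trace - (B * Dᵀ).trace - B.trace * D.trace) * e := by
  have h : ∀ y ∈ (Finset.univ : Finset (Fin N × Fin N × Fin N × Fin N)),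
      B y.2.1 y.2.2.1 * D y.2.2.2 y.1 * Gc n e y.1 y.2.1 y.2.2.1 y.2.2.2
      = ((n+1)*e) * (B y.2.1 y.2.2.1 * D y.2.2.2 y.1 *
          ((if y.1 = y.2.1 then (1:ℂ) else 0) * (if y.2.2.1 = y.2.2.2 then (1:ℂ) else 0)))
        - e * (B y.2.1 y.2.2.1 * D y.2.2.2 y.1 *
          ((if y.1 = y.2.2.1 then (1:ℂ) else 0) * (if y.2.1 = y.2.2.2 then (1:ℂ) else 0)))
        - e * (B y.2.1 y.2.2.1 * D y.2.2.2 y.1 *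
          ((if y.1 = y.2.2.2 then (1:ℂ) else 0) * (if y.2.1 = y.2.2.1 then (1:ℂ) else 0))) := by
    intro y _
    simp only [Gc]
    ring
  rw [Finset.sum_congr rfl h, Finset.sum_sub_distrib, Finset.sum_sub_distrib,
    ← Finset.mul_sum, ← Finset.mul_sum, ← Finset.mul_sum, S1, S2, S3]
  ring

lemma colsum2 (B D : Matrix (Fin N) (Fin N) ℂ) (n e : ℂ) :
    ∑ y : Fin N × Fin N × Fin N × Fin N,
      B y.2.1 y.2.2.1 * D y.2.2.2 y.1 * Gc n e y.1 y.2.2.1 y.2.1 y.2.2.2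
    = ((n + 1) * (B * Dᵀ).trace - (B * D).trace - B.trace * D.trace) * e := by
  have h : ∀ y ∈ (Finset.univ : Finset (Fin N × Fin N × Fin N × Fin N)),
      B y.2.1 y.2.2.1 * D y.2.2.2 y.1 * Gc n e y.1 y.2.2.1 y.2.1 y.2.2.2
      = ((n+1)*e) * (B y.2.1 y.2.2.1 * D y.2.2.2 y.1 *
          ((if y.1 = y.2.2.1 then (1:ℂ) else 0) * (if y.2.1 = y.2.2.2 then (1:ℂ) else 0)))
        - e * (B y.2.1 y.2.2.1 * D y.2.2.2 y.1 *
          ((if y.1 = y.2.1 then (1:ℂ) else 0) * (if y.2.2.1 = y.2.2.2 then (1:ℂ) else 0)))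
        - e * (B y.2.1 y.2.2.1 * D y.2.2.2 y.1 *
          ((if y.1 = y.2.2.2 then (1:ℂ) else 0) * (if y.2.2.1 = y.2.1 then (1:ℂ) else 0))) := by
    intro y _
    simp only [Gc]
    ring
  rw [Finset.sum_congr rfl h, Finset.sum_sub_distrib, Finset.sum_sub_distrib,
    ← Finset.mul_sum, ← Finset.mul_sum, ← Finset.mul_sum, S1, S2, S3b]
  ring

lemma colsum3 (B D : Matrix (Fin N) (Fin N) ℂ) (n e : ℂ) :
    ∑ y : Fin N × Fin N × Fin N × Fin N,
      B y.2.1 y.2.2.1 * D y.2.2.2 y.1 * Gc n e y.1 y.2.2.2 y.2.1 y.2.2.1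
    = ((n + 1) * (B.trace * D.trace) - (B * D).trace - (B * Dᵀ).trace) * e := by
  have h : ∀ y ∈ (Finset.univ : Finset (Fin N × Fin N × Fin N × Fin N)),
      B y.2.1 y.2.2.1 * D y.2.2.2 y.1 * Gc n e y.1 y.2.2.2 y.2.1 y.2.2.1
      = ((n+1)*e) * (B y.2.1 y.2.2.1 * D y.2.2.2 y.1 *
          ((if y.1 = y.2.2.2 then (1:ℂ) else 0) * (if y.2.1 = y.2.2.1 then (1:ℂ) else 0)))
        - e * (B y.2.1 y.2.2.1 * D y.2.2.2 y.1 *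
          ((if y.1 = y.2.1 then (1:ℂ) else 0) * (if y.2.2.2 = y.2.2.1 then (1:ℂ) else 0)))
        - e * (B y.2.1 y.2.2.1 * D y.2.2.2 y.1 *
          ((if y.1 = y.2.2.1 then (1:ℂ) else 0) * (if y.2.2.2 = y.2.1 then (1:ℂ) else 0))) := by
    intro y _
    simp only [Gc]
    ring
  rw [Finset.sum_congr rfl h, Finset.sum_sub_distrib, Finset.sum_sub_distrib,
    ← Finset.mul_sum, ← Finset.mul_sum, ← Finset.mul_sum, S3, S1b, S2b]
  ring

lemma prod_split (f g : (Fin N × Fin N × Fin N × Fin N) → ℂ) :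
    ∑ y : (Fin N × Fin N × Fin N × Fin N) × (Fin N × Fin N × Fin N × Fin N), f y.1 * g y.2
      = (∑ c, f c) * (∑ r, g r) := by
  rw [Finset.sum_mul_sum]
  exact Fintype.sum_prod_type _

lemma contract (A B C D : Matrix (Fin N) (Fin N) ℂ) (n e : ℂ) :
    ∑ x : Fin N × Fin N × Fin N × Fin N × Fin N × Fin N × Fin N × Fin N,
      (A x.2.2.2.2.2.2.2 x.2.2.2.2.2.2.1 * C x.2.2.2.1 x.2.2.1) *
      (B x.2.2.2.2.2.1 x.2.2.2.2.1 * D x.2.1 x.1) *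
      ((if x.2.2.2.2.2.2.2 = x.2.2.2.2.2.2.1 then (1:ℂ) else 0) *
         (if x.2.2.2.1 = x.2.2.1 then (1:ℂ) else 0) *
         Gc n e x.1 x.2.2.2.2.2.1 x.2.2.2.2.1 x.2.1
       + (if x.2.2.2.2.2.2.2 = x.2.2.2.1 then (1:ℂ) else 0) *
         (if x.2.2.2.2.2.2.1 = x.2.2.1 then (1:ℂ) else 0) *
         Gc n e x.1 x.2.2.2.2.1 x.2.2.2.2.2.1 x.2.1
       + (if x.2.2.2.2.2.2.2 = x.2.2.1 then (1:ℂ) else 0) *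
         (if x.2.2.2.2.2.2.1 = x.2.2.2.1 then (1:ℂ) else 0) *
         Gc n e x.1 x.2.1 x.2.2.2.2.2.1 x.2.2.2.2.1)
    = (A.trace * C.trace * ((n + 1) * (B * D).trace - (B * Dᵀ).trace - B.trace * D.trace)
      + (A * Cᵀ).trace * ((n + 1) * (B * Dᵀ).trace - (B * D).trace - B.trace * D.trace)
      + (A * C).trace * ((n + 1) * (B.trace * D.trace) - (B * D).trace - (B * Dᵀ).trace)) * e := by
  classical
  have hre := Fintype.sum_equiv
    (⟨fun y => (y.1.1, y.1.2.2.2, y.2.2.2.2, y.2.2.2.1, y.1.2.2.1, y.1.2.1, y.2.2.1, y.2.1),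
      fun x => ((x.1, x.2.2.2.2.2.1, x.2.2.2.2.1, x.2.1),
                (x.2.2.2.2.2.2.2, x.2.2.2.2.2.2.1, x.2.2.2.1, x.2.2.1)),
      fun y => rfl, fun x => rfl⟩ :
      ((Fin N × Fin N × Fin N × Fin N) × (Fin N × Fin N × Fin N × Fin N)) ≃
        (Fin N × Fin N × Fin N × Fin N × Fin N × Fin N × Fin N × Fin N))
    (fun y : (Fin N × Fin N × Fin N × Fin N) × (Fin N × Fin N × Fin N × Fin N) =>
      (A y.2.1 y.2.2.1 * C y.2.2.2.1 y.2.2.2.2) *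
      (B y.1.2.1 y.1.2.2.1 * D y.1.2.2.2 y.1.1) *
      ((if y.2.1 = y.2.2.1 then (1:ℂ) else 0) *
         (if y.2.2.2.1 = y.2.2.2.2 then (1:ℂ) else 0) *
         Gc n e y.1.1 y.1.2.1 y.1.2.2.1 y.1.2.2.2
       + (if y.2.1 = y.2.2.2.1 then (1:ℂ) else 0) *
         (if y.2.2.1 = y.2.2.2.2 then (1:ℂ) else 0) *
         Gc n e y.1.1 y.1.2.2.1 y.1.2.1 y.1.2.2.2
       + (if y.2.1 = y.2.2.2.2 then (1:ℂ) else 0) *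
         (if y.2.2.1 = y.2.2.2.1 then (1:ℂ) else 0) *
         Gc n e y.1.1 y.1.2.2.2 y.1.2.1 y.1.2.2.1))
    (fun x => (A x.2.2.2.2.2.2.2 x.2.2.2.2.2.2.1 * C x.2.2.2.1 x.2.2.1) *
      (B x.2.2.2.2.2.1 x.2.2.2.2.1 * D x.2.1 x.1) *
      ((if x.2.2.2.2.2.2.2 = x.2.2.2.2.2.2.1 then (1:ℂ) else 0) *
         (if x.2.2.2.1 = x.2.2.1 then (1:ℂ) else 0) *
         Gc n e x.1 x.2.2.2.2.2.1 x.2.2.2.2.1 x.2.1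
       + (if x.2.2.2.2.2.2.2 = x.2.2.2.1 then (1:ℂ) else 0) *
         (if x.2.2.2.2.2.2.1 = x.2.2.1 then (1:ℂ) else 0) *
         Gc n e x.1 x.2.2.2.2.1 x.2.2.2.2.2.1 x.2.1
       + (if x.2.2.2.2.2.2.2 = x.2.2.1 then (1:ℂ) else 0) *
         (if x.2.2.2.2.2.2.1 = x.2.2.2.1 then (1:ℂ) else 0) *
         Gc n e x.1 x.2.1 x.2.2.2.2.2.1 x.2.2.2.2.1))
    (fun y => by simp only [Equiv.coe_fn_mk])
  rw [← hre]
  have hsplit : ∀ y ∈ (Finset.univ :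
      Finset ((Fin N × Fin N × Fin N × Fin N) × (Fin N × Fin N × Fin N × Fin N))),
      (A y.2.1 y.2.2.1 * C y.2.2.2.1 y.2.2.2.2) *
      (B y.1.2.1 y.1.2.2.1 * D y.1.2.2.2 y.1.1) *
      ((if y.2.1 = y.2.2.1 then (1:ℂ) else 0) *
         (if y.2.2.2.1 = y.2.2.2.2 then (1:ℂ) else 0) *
         Gc n e y.1.1 y.1.2.1 y.1.2.2.1 y.1.2.2.2
       + (if y.2.1 = y.2.2.2.1 then (1:ℂ) else 0) *
         (if y.2.2.1 = y.2.2.2.2 then (1:ℂ) else 0) *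
         Gc n e y.1.1 y.1.2.2.1 y.1.2.1 y.1.2.2.2
       + (if y.2.1 = y.2.2.2.2 then (1:ℂ) else 0) *
         (if y.2.2.1 = y.2.2.2.1 then (1:ℂ) else 0) *
         Gc n e y.1.1 y.1.2.2.2 y.1.2.1 y.1.2.2.1)
      = (B y.1.2.1 y.1.2.2.1 * D y.1.2.2.2 y.1.1 * Gc n e y.1.1 y.1.2.1 y.1.2.2.1 y.1.2.2.2) *
          (A y.2.1 y.2.2.1 * C y.2.2.2.1 y.2.2.2.2 *
            ((if y.2.1 = y.2.2.1 then (1:ℂ) else 0) * (if y.2.2.2.1 = y.2.2.2.2 then (1:ℂ) else 0)))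
        + (B y.1.2.1 y.1.2.2.1 * D y.1.2.2.2 y.1.1 * Gc n e y.1.1 y.1.2.2.1 y.1.2.1 y.1.2.2.2) *
          (A y.2.1 y.2.2.1 * C y.2.2.2.1 y.2.2.2.2 *
            ((if y.2.1 = y.2.2.2.1 then (1:ℂ) else 0) * (if y.2.2.1 = y.2.2.2.2 then (1:ℂ) else 0)))
        + (B y.1.2.1 y.1.2.2.1 * D y.1.2.2.2 y.1.1 * Gc n e y.1.1 y.1.2.2.2 y.1.2.1 y.1.2.2.1) *
          (A y.2.1 y.2.2.1 * C y.2.2.2.1 y.2.2.2.2 *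
            ((if y.2.1 = y.2.2.2.2 then (1:ℂ) else 0) * (if y.2.2.1 = y.2.2.2.1 then (1:ℂ) else 0))) :=
    fun y _ => by ring
  have hp1 : (∑ y : (Fin N × Fin N × Fin N × Fin N) × (Fin N × Fin N × Fin N × Fin N),
      (B y.1.2.1 y.1.2.2.1 * D y.1.2.2.2 y.1.1 * Gc n e y.1.1 y.1.2.1 y.1.2.2.1 y.1.2.2.2) *
        (A y.2.1 y.2.2.1 * C y.2.2.2.1 y.2.2.2.2 *
          ((if y.2.1 = y.2.2.1 then (1:ℂ) else 0) * (if y.2.2.2.1 = y.2.2.2.2 then (1:ℂ) else 0))))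
      = (∑ c : Fin N × Fin N × Fin N × Fin N,
          B c.2.1 c.2.2.1 * D c.2.2.2 c.1 * Gc n e c.1 c.2.1 c.2.2.1 c.2.2.2) *
        (∑ r : Fin N × Fin N × Fin N × Fin N,
          A r.1 r.2.1 * C r.2.2.1 r.2.2.2 *
            ((if r.1 = r.2.1 then (1:ℂ) else 0) * (if r.2.2.1 = r.2.2.2 then (1:ℂ) else 0))) :=
    prod_split (fun c => B c.2.1 c.2.2.1 * D c.2.2.2 c.1 * Gc n e c.1 c.2.1 c.2.2.1 c.2.2.2)
      (fun r => A r.1 r.2.1 * C r.2.2.1 r.2.2.2 *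
        ((if r.1 = r.2.1 then (1:ℂ) else 0) * (if r.2.2.1 = r.2.2.2 then (1:ℂ) else 0)))
  have hp2 : (∑ y : (Fin N × Fin N × Fin N × Fin N) × (Fin N × Fin N × Fin N × Fin N),
      (B y.1.2.1 y.1.2.2.1 * D y.1.2.2.2 y.1.1 * Gc n e y.1.1 y.1.2.2.1 y.1.2.1 y.1.2.2.2) *
        (A y.2.1 y.2.2.1 * C y.2.2.2.1 y.2.2.2.2 *
          ((if y.2.1 = y.2.2.2.1 then (1:ℂ) else 0) * (if y.2.2.1 = y.2.2.2.2 then (1:ℂ) else 0))))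
      = (∑ c : Fin N × Fin N × Fin N × Fin N,
          B c.2.1 c.2.2.1 * D c.2.2.2 c.1 * Gc n e c.1 c.2.2.1 c.2.1 c.2.2.2) *
        (∑ r : Fin N × Fin N × Fin N × Fin N,
          A r.1 r.2.1 * C r.2.2.1 r.2.2.2 *
            ((if r.1 = r.2.2.1 then (1:ℂ) else 0) * (if r.2.1 = r.2.2.2 then (1:ℂ) else 0))) :=
    prod_split (fun c => B c.2.1 c.2.2.1 * D c.2.2.2 c.1 * Gc n e c.1 c.2.2.1 c.2.1 c.2.2.2)
      (fun r => A r.1 r.2.1 * C r.2.2.1 r.2.2.2 *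
        ((if r.1 = r.2.2.1 then (1:ℂ) else 0) * (if r.2.1 = r.2.2.2 then (1:ℂ) else 0)))
  have hp3 : (∑ y : (Fin N × Fin N × Fin N × Fin N) × (Fin N × Fin N × Fin N × Fin N),
      (B y.1.2.1 y.1.2.2.1 * D y.1.2.2.2 y.1.1 * Gc n e y.1.1 y.1.2.2.2 y.1.2.1 y.1.2.2.1) *
        (A y.2.1 y.2.2.1 * C y.2.2.2.1 y.2.2.2.2 *
          ((if y.2.1 = y.2.2.2.2 then (1:ℂ) else 0) * (if y.2.2.1 = y.2.2.2.1 then (1:ℂ) else 0))))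
      = (∑ c : Fin N × Fin N × Fin N × Fin N,
          B c.2.1 c.2.2.1 * D c.2.2.2 c.1 * Gc n e c.1 c.2.2.2 c.2.1 c.2.2.1) *
        (∑ r : Fin N × Fin N × Fin N × Fin N,
          A r.1 r.2.1 * C r.2.2.1 r.2.2.2 *
            ((if r.1 = r.2.2.2 then (1:ℂ) else 0) * (if r.2.1 = r.2.2.1 then (1:ℂ) else 0))) :=
    prod_split (fun c => B c.2.1 c.2.2.1 * D c.2.2.2 c.1 * Gc n e c.1 c.2.2.2 c.2.1 c.2.2.1)
      (fun r => A r.1 r.2.1 * C r.2.2.1 r.2.2.2 *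
        ((if r.1 = r.2.2.2 then (1:ℂ) else 0) * (if r.2.1 = r.2.2.1 then (1:ℂ) else 0)))
  rw [Finset.sum_congr rfl hsplit, Finset.sum_add_distrib, Finset.sum_add_distrib,
    hp1, hp2, hp3, colsum1, colsum2, colsum3, R1, R2, R3]
  ring

lemma trace_expand (A B C D : Matrix (Fin N) (Fin N) ℂ) (O : Mat N) :
    ((O.map Complex.ofReal)ᵀ * A * O.map Complex.ofReal * B *
        (O.map Complex.ofReal)ᵀ * C * O.map Complex.ofReal * D).trace
    = ∑ x : Fin N × Fin N × Fin N × Fin N × Fin N × Fin N × Fin N × Fin N,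
        (A x.2.2.2.2.2.2.2 x.2.2.2.2.2.2.1 * C x.2.2.2.1 x.2.2.1) *
        (B x.2.2.2.2.2.1 x.2.2.2.2.1 * D x.2.1 x.1) *
        ((O x.2.2.2.2.2.2.2 x.1 * O x.2.2.2.2.2.2.1 x.2.2.2.2.2.1 *
          O x.2.2.2.1 x.2.2.2.2.1 * O x.2.2.1 x.2.1 : ℝ) : ℂ) := by
  simp only [Matrix.trace, Matrix.diag, Matrix.mul_apply, Matrix.transpose_apply,
    Matrix.map_apply, Finset.sum_mul, Finset.mul_sum, Fintype.sum_prod_type]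
  refine Finset.sum_congr rfl fun a _ => ?_
  refine Finset.sum_congr rfl fun d _ => ?_
  refine Finset.sum_congr rfl fun l _ => ?_
  refine Finset.sum_congr rfl fun k _ => ?_
  refine Finset.sum_congr rfl fun c _ => ?_
  refine Finset.sum_congr rfl fun b _ => ?_
  refine Finset.sum_congr rfl fun j _ => ?_
  refine Finset.sum_congr rfl fun i _ => ?_
  push_cast
  ring

end OrthM

/-- For `N ≥ 2` and any `N×N` complex matrices `A, B, C, D`, the average over the real
orthogonal group `O(N)` with respect to normalized Haar measure satisfies
`⟨Tr(OᵗAOBOᵗCOD)⟩ = ((N+1)/(N(N−1)(N+2)))·[Tr(A)Tr(C)Tr(BD) + Tr(ACᵗ)Tr(BDᵗ) + Tr(AC)Tr(B)Tr(D)]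
  − (1/(N(N−1)(N+2)))·[Tr(A)Tr(C)Tr(BDᵗ) + Tr(A)Tr(C)Tr(B)Tr(D) + Tr(ACᵗ)Tr(BD)
      + Tr(ACᵗ)Tr(B)Tr(D) + Tr(AC)Tr(BD) + Tr(AC)Tr(BDᵗ)]`. -/
theorem orthogonal_fourth_moment (N : ℕ) (hN : 2 ≤ N) (A B C D : Matrix (Fin N) (Fin N) ℂ)
    (μ : Measure (Matrix (Fin N) (Fin N) ℝ)) [IsProbabilityMeasure μ]
    (hmem : ∀ᵐ O ∂μ, Oᵀ * O = 1)
    (hinv : ∀ S : Matrix (Fin N) (Fin N) ℝ, Sᵀ * S = 1 → μ.map (fun O => S * O) = μ) :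
    ∫ O, ((O.map Complex.ofReal)ᵀ * A * O.map Complex.ofReal * B *
        (O.map Complex.ofReal)ᵀ * C * O.map Complex.ofReal * D).trace ∂μ =
      (((N : ℂ) + 1) / ((N : ℂ) * ((N : ℂ) - 1) * ((N : ℂ) + 2))) *
        (A.trace * C.trace * (B * D).trace + (A * Cᵀ).trace * (B * Dᵀ).trace +
          (A * C).trace * B.trace * D.trace) -
      (1 / ((N : ℂ) * ((N : ℂ) - 1) * ((N : ℂ) + 2))) *
        (A.trace * C.trace * (B * Dᵀ).trace + A.trace * C.trace * B.trace * D.trace +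
          (A * Cᵀ).trace * (B * D).trace + (A * Cᵀ).trace * B.trace * D.trace +
          (A * C).trace * (B * D).trace + (A * C).trace * (B * Dᵀ).trace) := by
  classical
  have hcast : ∀ i j k l p q r s : Fin N,
      ((OrthM.I4 μ i j k l p q r s : ℝ) : ℂ)
      = (if i = j then (1:ℂ) else 0) * (if k = l then (1:ℂ) else 0) *
          OrthM.Gc (N:ℂ) (((N:ℂ) * ((N:ℂ) - 1) * ((N:ℂ) + 2))⁻¹) p q r s
        + (if i = k then (1:ℂ) else 0) * (if j = l then (1:ℂ) else 0) *
          OrthM.Gc (N:ℂ) (((N:ℂ) * ((N:ℂ) - 1) * ((N:ℂ) + 2))⁻¹) p r q s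
        + (if i = l then (1:ℂ) else 0) * (if j = k then (1:ℂ) else 0) *
          OrthM.Gc (N:ℂ) (((N:ℂ) * ((N:ℂ) - 1) * ((N:ℂ) + 2))⁻¹) p s q r := by
    intro i j k l p q r s
    rw [OrthM.I4_master hN hmem hinv]
    simp only [OrthM.Fw, OrthM.Gc]
    push_cast [apply_ite Complex.ofReal]
    ring
  have key : ∀ (i j k l p q r s : Fin N) (co : ℂ),
      (∫ O : Matrix (Fin N) (Fin N) ℝ,
        co * ((O i p * O j q * O k r * O l s : ℝ) : ℂ) ∂μ)
      = co * ((if i = j then (1:ℂ) else 0) * (if k = l then (1:ℂ) else 0) *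
            OrthM.Gc (N:ℂ) (((N:ℂ) * ((N:ℂ) - 1) * ((N:ℂ) + 2))⁻¹) p q r s
          + (if i = k then (1:ℂ) else 0) * (if j = l then (1:ℂ) else 0) *
            OrthM.Gc (N:ℂ) (((N:ℂ) * ((N:ℂ) - 1) * ((N:ℂ) + 2))⁻¹) p r q s
          + (if i = l then (1:ℂ) else 0) * (if j = k then (1:ℂ) else 0) *
            OrthM.Gc (N:ℂ) (((N:ℂ) * ((N:ℂ) - 1) * ((N:ℂ) + 2))⁻¹) p s q r) := by
    intro i j k l p q r s co
    rw [integral_const_mul]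
    have h0 : (∫ O : Matrix (Fin N) (Fin N) ℝ,
        ((O i p * O j q * O k r * O l s : ℝ) : ℂ) ∂μ)
        = ((OrthM.I4 μ i j k l p q r s : ℝ) : ℂ) := integral_ofReal
    rw [h0, hcast]
  have hswap := integral_finset_sum (μ := μ) Finset.univ
    (f := fun (x : Fin N × Fin N × Fin N × Fin N × Fin N × Fin N × Fin N × Fin N)
      (O : Matrix (Fin N) (Fin N) ℝ) =>
      (A x.2.2.2.2.2.2.2 x.2.2.2.2.2.2.1 * C x.2.2.2.1 x.2.2.1) *
      (B x.2.2.2.2.2.1 x.2.2.2.2.1 * D x.2.1 x.1) *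
      ((O x.2.2.2.2.2.2.2 x.1 * O x.2.2.2.2.2.2.1 x.2.2.2.2.2.1 *
        O x.2.2.2.1 x.2.2.2.2.1 * O x.2.2.1 x.2.1 : ℝ) : ℂ))
    (fun x _ => ((OrthM.integrable4 hmem _ _ _ _ _ _ _ _).ofReal.const_mul _))
  rw [integral_congr_ae (Filter.Eventually.of_forall fun O => OrthM.trace_expand A B C D O),
    hswap]
  simp only [key]
  rw [OrthM.contract A B C D (N:ℂ) (((N:ℂ) * ((N:ℂ) - 1) * ((N:ℂ) + 2))⁻¹)]
  ring
end

section
/- For any 2N×2N complex matrices A and B, the averages over the compact symplectic group SP(2N) with respect to normalized Haar measure satisfy: ⟨Tr(U*AUB)⟩ = (1/(2N))·Tr(A)·Tr(B); ⟨Tr(UᵗAUB)⟩ = (1/(2N))·Tr(IA)·Tr(I*B); ⟨Tr(UAUB)⟩ = ⟨Tr(U*AU*B)⟩ = (1/(2N))·Tr(A·I·Bᵗ·I); and ⟨Tr(ŪAUB)⟩ = (1/(2N))·Tr(A·Bᵗ). -/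
/-
Left invariance of `μ` puts the twirl `X ↦ ∫ U X Uᴴ dμ` in the commutant of `SP(2N)`, and that
commutant consists of scalars: commuting with `J` and with the copies `diag(P, P̄)` of `U(N)`
forces the block form `diag(c, c)`, and `U(N)` spans all `N × N` matrices. Comparing traces gives
`∫ U X Uᴴ = (Tr X / 2N) • 1`, which is the first formula. The realignment `∑ E_jk Z E_jk = Zᵀ`
turns it into `∫ Uᵀ Y Uᴴ = Yᵀ / 2N`, which gives the last one. The other three reduce pointwise to
these two, because a unitary symplectic `U` satisfies `J U = Ū J`.
-/

open MeasureTheory Matrix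

/-- The `2N×2N` matrix `I` with `N×N` blocks `(0, -1; 1, 0)`. -/
def Imat (N : ℕ) : Matrix (Fin N ⊕ Fin N) (Fin N ⊕ Fin N) ℂ :=
  Matrix.fromBlocks 0 (-1) 1 0

-- Unitary matrices have operator norm one, which makes all the integrands below bounded.
open scoped Matrix.Norms.L2Operator

instance Matrix.borelSpace {m n α : Type*} [Countable m] [Countable n] [TopologicalSpace α]
    [MeasurableSpace α] [SecondCountableTopology α] [BorelSpace α] :
    BorelSpace (Matrix m n α) :=
  inferInstanceAs (BorelSpace (m → n → α))

namespace Matrix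

section Twirl

variable {n : Type*} [Fintype n] [DecidableEq n]

theorem mem_range_scalar_of_forall_unitary_commute {M : Matrix n n ℂ}
    (hM : ∀ P ∈ unitaryGroup n ℂ, Commute P M) : M ∈ Set.range (scalar n) := by
  have hspan : Submodule.span ℂ (unitaryGroup n ℂ : Set (Matrix n n ℂ)) ≤
      Subalgebra.toSubmodule (Subalgebra.centralizer ℂ {M}) :=
    Submodule.span_le.mpr fun P hP => by
      simpa [Set.mem_centralizer_iff] using (hM P hP).eq.symm
  rw [CStarAlgebra.span_unitary] at hspan
  refine mem_range_scalar_iff_commute_single'.mpr fun i j => ?_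
  simpa [Subalgebra.mem_centralizer_iff, Commute, SemiconjBy, eq_comm] using
    hspan (Submodule.mem_top (x := single i j 1))

theorem eq_trace_div_card_smul_one {M : Matrix n n ℂ} (hM : M ∈ Set.range (scalar n)) :
    M = (M.trace / Fintype.card n) • 1 := by
  obtain ⟨c, rfl⟩ := hM
  cases isEmpty_or_nonempty n
  · exact Subsingleton.elim _ _
  · have : (Fintype.card n : ℂ) ≠ 0 := by simp
    rw [scalar_apply, trace_diagonal]
    simp [this, smul_one_eq_diagonal]

theorem sum_single_mul_mul_single (Z : Matrix n n ℂ) :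
    ∑ j, ∑ k, single j k (1 : ℂ) * Z * single j k 1 = Zᵀ := by
  simp only [single_mul_mul_single, one_mul, mul_one]
  exact (matrix_eq_sum_single Zᵀ).symm

theorem trace_integral {α : Type*} [MeasurableSpace α] {ν : Measure α} {F : α → Matrix n n ℂ}
    (hF : Integrable F ν) : (∫ a, F a ∂ν).trace = ∫ a, (F a).trace ∂ν :=
  ((traceLinearMap n ℂ ℂ).toContinuousLinearMap.integral_comp_comm hF).symm

theorem integrable_mul_mul_of_ae_mem_unitaryGroup {α : Type*} [MeasurableSpace α]
    {ν : Measure α} [IsFiniteMeasure ν] {f g : α → Matrix n n ℂ}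
    (hf : AEStronglyMeasurable f ν) (hg : AEStronglyMeasurable g ν)
    (hfg : ∀ᵐ a ∂ν, f a ∈ unitaryGroup n ℂ ∧ g a ∈ unitaryGroup n ℂ) (X : Matrix n n ℂ) :
    Integrable (fun a => f a * X * g a) ν := by
  refine .of_bound ((hf.mul aestronglyMeasurable_const).mul hg) ‖X‖ ?_
  filter_upwards [hfg] with a ⟨hfa, hga⟩
  rw [CStarRing.norm_mul_mem_unitary _ hga, CStarRing.norm_mem_unitary_mul _ hfa]

variable {μ : Measure (Matrix n n ℂ)}

omit [DecidableEq n] in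
theorem integral_comp_mul_left_of_map_eq {E : Type*} [NormedAddCommGroup E] [NormedSpace ℝ E]
    {S : Matrix n n ℂ} (hS : μ.map (S * ·) = μ) {f : Matrix n n ℂ → E}
    (hf : AEStronglyMeasurable f μ) : ∫ U, f (S * U) ∂μ = ∫ U, f U ∂μ := by
  rw [← integral_map (continuous_const_mul S).aemeasurable (hS.symm ▸ hf), hS]

theorem integrable_mul_mul_conjTranspose [IsFiniteMeasure μ]
    (hμ : ∀ᵐ U ∂μ, U ∈ unitaryGroup n ℂ) (X : Matrix n n ℂ) :
    Integrable (fun U => U * X * Uᴴ) μ :=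
  integrable_mul_mul_of_ae_mem_unitaryGroup aestronglyMeasurable_id
    continuous_id.matrix_conjTranspose.aestronglyMeasurable
    (by filter_upwards [hμ] with U hU using ⟨hU, Unitary.star_mem hU⟩) X

theorem integrable_transpose_mul_mul_conjTranspose [IsFiniteMeasure μ]
    (hμ : ∀ᵐ U ∂μ, U ∈ unitaryGroup n ℂ) (X : Matrix n n ℂ) :
    Integrable (fun U => Uᵀ * X * Uᴴ) μ :=
  integrable_mul_mul_of_ae_mem_unitaryGroup continuous_id.matrix_transpose.aestronglyMeasurable
    continuous_id.matrix_conjTranspose.aestronglyMeasurable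
    (by filter_upwards [hμ] with U hU using
      ⟨transpose_mem_unitaryGroup_iff.mpr hU, Unitary.star_mem hU⟩) X

variable [IsProbabilityMeasure μ] {G : Set (Matrix n n ℂ)}

theorem integral_mul_mul_conjTranspose (hμ : ∀ᵐ U ∂μ, U ∈ unitaryGroup n ℂ)
    (hG : G ⊆ unitaryGroup n ℂ) (hinv : ∀ S ∈ G, μ.map (S * ·) = μ)
    (hirr : ∀ M, (∀ S ∈ G, Commute S M) → M ∈ Set.range (scalar n)) (X : Matrix n n ℂ) :
    ∫ U, U * X * Uᴴ ∂μ = (X.trace / Fintype.card n) • 1 := by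
  have hint := integrable_mul_mul_conjTranspose hμ X
  set M := ∫ U, U * X * Uᴴ ∂μ
  have hcomm : ∀ S ∈ G, Commute S M := fun S hS => by
    have hconj : S * M * Sᴴ = M :=
      calc S * M * Sᴴ = ∫ U, S * (U * X * Uᴴ) * Sᴴ ∂μ := by
            rw [integral_mul_const_of_integrable (hint.const_mul S),
              integral_const_mul_of_integrable hint]
        _ = ∫ U, (S * U) * X * (S * U)ᴴ ∂μ := by
            simp only [conjTranspose_mul, Matrix.mul_assoc]
        _ = M := integral_comp_mul_left_of_map_eq (f := fun U => U * X * Uᴴ) (hinv S hS)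
            hint.aestronglyMeasurable
    have hunit : Sᴴ * S = 1 := mem_unitaryGroup_iff'.mp (hG hS)
    calc S * M = S * M * Sᴴ * S := by rw [Matrix.mul_assoc _ Sᴴ, hunit, Matrix.mul_one]
      _ = M * S := by rw [hconj]
  have htrace : M.trace = X.trace := by
    rw [trace_integral hint, integral_congr_ae (g := fun _ => X.trace), integral_const,
      probReal_univ, one_smul]
    filter_upwards [hμ] with U hU
    rw [Matrix.mul_assoc, trace_mul_comm, Matrix.mul_assoc, ← star_eq_conjTranspose,
      mem_unitaryGroup_iff'.mp hU, Matrix.mul_one]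
  rw [eq_trace_div_card_smul_one (hirr M hcomm), htrace]

theorem integral_transpose_mul_mul_conjTranspose (hμ : ∀ᵐ U ∂μ, U ∈ unitaryGroup n ℂ)
    (hG : G ⊆ unitaryGroup n ℂ) (hinv : ∀ S ∈ G, μ.map (S * ·) = μ)
    (hirr : ∀ M, (∀ S ∈ G, Commute S M) → M ∈ Set.range (scalar n)) (Y : Matrix n n ℂ) :
    ∫ U, Uᵀ * Y * Uᴴ ∂μ = (Fintype.card n : ℂ)⁻¹ • Yᵀ := by
  have hint := integrable_mul_mul_conjTranspose hμ
  have hrealign : ∀ U : Matrix n n ℂ, Uᵀ * Y * Uᴴ =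
      ∑ j, ∑ k, single j k (1 : ℂ) * Yᵀ * (U * single j k 1 * Uᴴ) := fun U => by
    rw [← transpose_transpose Y, ← transpose_mul, ← sum_single_mul_mul_single, Finset.sum_mul]
    simp only [Finset.sum_mul, Matrix.mul_assoc, transpose_transpose]
  simp_rw [hrealign]
  rw [integral_finsetSum _ fun j _ => integrable_finsetSum _ fun k _ => (hint _).const_mul _]
  simp_rw [integral_finsetSum _ fun k _ => (hint _).const_mul _,
    integral_const_mul_of_integrable (hint _), integral_mul_mul_conjTranspose hμ hG hinv hirr]
  have htrace : ∀ j k : n, (single j k (1 : ℂ)).trace = (1 : Matrix n n ℂ) j k := fun j k => by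
    by_cases h : j = k <;> simp [h, one_apply]
  calc ∑ j, ∑ k, single j k 1 * Yᵀ * ((single j k (1 : ℂ)).trace / Fintype.card n) • 1
      = (∑ j, ∑ k, single j k (((Fintype.card n : ℂ)⁻¹ • (1 : Matrix n n ℂ)) j k)) * Yᵀ := by
        simp only [htrace, Matrix.mul_smul, ← smul_mul, smul_single, Finset.sum_mul, smul_apply,
          smul_eq_mul, mul_one, div_eq_inv_mul]
    _ = (Fintype.card n : ℂ)⁻¹ • Yᵀ := by
        rw [← matrix_eq_sum_single, smul_mul, Matrix.one_mul]

end Twirl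

theorem J_conjTranspose {l : Type*} [DecidableEq l] : (J l ℂ)ᴴ = -J l ℂ := by
  simp [J, fromBlocks_conjTranspose, fromBlocks_neg]

section CompactSymplectic

variable {l : Type*} [Fintype l] [DecidableEq l]

variable (l) in
def compactSymplecticGroup : Submonoid (Matrix (l ⊕ l) (l ⊕ l) ℂ) :=
  symplecticGroup l ℂ ⊓ unitaryGroup (l ⊕ l) ℂ

theorem mem_compactSymplecticGroup_iff {S : Matrix (l ⊕ l) (l ⊕ l) ℂ} :
    S ∈ compactSymplecticGroup l ↔ Sᴴ * S = 1 ∧ Sᵀ * J l ℂ * S = J l ℂ := by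
  rw [compactSymplecticGroup, Submonoid.mem_inf, SymplecticGroup.mem_iff', mem_unitaryGroup_iff',
    and_comm, star_eq_conjTranspose]

theorem J_mem_compactSymplecticGroup : J l ℂ ∈ compactSymplecticGroup l := by
  rw [mem_compactSymplecticGroup_iff, J_conjTranspose, J_transpose, Matrix.neg_mul,
    Matrix.neg_mul, J_squared, neg_neg, Matrix.neg_mul, Matrix.one_mul, neg_neg]
  exact ⟨rfl, rfl⟩

theorem fromBlocks_conj_mem_compactSymplecticGroup {P : Matrix l l ℂ}
    (hP : P ∈ unitaryGroup l ℂ) : fromBlocks P 0 0 Pᴴᵀ ∈ compactSymplecticGroup l := by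
  have h₁ : Pᴴ * P = 1 := mem_unitaryGroup_iff'.mp hP
  have h₂ : Pᵀ * Pᴴᵀ = 1 := by rw [← transpose_mul, h₁, transpose_one]
  have h₃ : Pᴴᵀᴴ = Pᵀ := by
    rw [← conjTranspose_transpose_eq_transpose_conjTranspose, conjTranspose_conjTranspose]
  have h₄ : Pᴴᵀᵀ = Pᴴ := transpose_transpose _
  refine mem_compactSymplecticGroup_iff.mpr ⟨?_, ?_⟩
  · simp [fromBlocks_conjTranspose, fromBlocks_multiply, h₁, h₂, h₃]
  · simp [J, fromBlocks_transpose, fromBlocks_multiply, h₁, h₂, h₄]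

theorem mem_range_scalar_of_forall_compactSymplectic_commute {M : Matrix (l ⊕ l) (l ⊕ l) ℂ}
    (hM : ∀ S ∈ compactSymplecticGroup l, Commute S M) : M ∈ Set.range (scalar (l ⊕ l)) := by
  obtain ⟨A, B, C, D, rfl⟩ : ∃ A B C D, M = fromBlocks A B C D :=
    ⟨_, _, _, _, (fromBlocks_toBlocks M).symm⟩
  have hblocks : ∀ P ∈ unitaryGroup l ℂ, P * A = A * P ∧ P * B = B * Pᴴᵀ := fun P hP => by
    have := (hM _ (fromBlocks_conj_mem_compactSymplecticGroup hP)).eq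
    simp only [fromBlocks_multiply, fromBlocks_inj, Matrix.zero_mul, Matrix.mul_zero, add_zero,
      zero_add] at this
    exact ⟨this.1, this.2.1⟩
  obtain ⟨c, rfl⟩ := mem_range_scalar_of_forall_unitary_commute fun P hP => (hblocks P hP).1
  have hB : B = 0 := by
    have hI : Complex.I • (1 : Matrix l l ℂ) ∈ unitaryGroup l ℂ := by
      simp [mem_unitaryGroup_iff', smul_smul]
    have h := (hblocks _ hI).2
    rw [Matrix.smul_mul, Matrix.one_mul, conjTranspose_smul, transpose_smul, conjTranspose_one,
      transpose_one, Matrix.mul_smul, Matrix.mul_one, Complex.star_def, Complex.conj_I,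
      ← sub_eq_zero, ← sub_smul, smul_eq_zero] at h
    exact h.resolve_left (by simp [Complex.ext_iff])
  have hJ := (hM _ J_mem_compactSymplecticGroup).eq
  simp only [J, fromBlocks_multiply, fromBlocks_inj, Matrix.zero_mul, Matrix.mul_zero, add_zero,
    zero_add, Matrix.one_mul, Matrix.mul_one, Matrix.neg_mul, Matrix.mul_neg, neg_inj] at hJ
  obtain ⟨hC, -, hD, -⟩ := hJ
  refine ⟨c, ?_⟩
  rw [← hD, hB, neg_eq_zero.mp (hC.trans hB), scalar_apply, scalar_apply, fromBlocks_diagonal]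
  exact congrArg diagonal (Sum.elim_const_const c).symm

variable {U : Matrix (l ⊕ l) (l ⊕ l) ℂ}

theorem J_mul_of_mem_compactSymplecticGroup (hU : U ∈ compactSymplecticGroup l) :
    J l ℂ * U = Uᴴᵀ * J l ℂ := by
  obtain ⟨-, hsymp⟩ := mem_compactSymplecticGroup_iff.mp hU
  have hunit : Uᴴᵀ * Uᵀ = 1 := by
    rw [← transpose_mul, ← star_eq_conjTranspose, mem_unitaryGroup_iff.mp hU.2, transpose_one]
  calc J l ℂ * U = Uᴴᵀ * (Uᵀ * J l ℂ * U) := by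
        rw [← Matrix.mul_assoc, ← Matrix.mul_assoc, hunit, Matrix.one_mul]
    _ = Uᴴᵀ * J l ℂ := by rw [hsymp]

theorem conjTranspose_mul_J_of_mem_compactSymplecticGroup (hU : U ∈ compactSymplecticGroup l) :
    Uᴴ * J l ℂ = J l ℂ * Uᵀ := by
  obtain ⟨hunit, -⟩ := mem_compactSymplecticGroup_iff.mp hU
  calc Uᴴ * J l ℂ = Uᴴ * (U * J l ℂ * Uᵀ) := by rw [SymplecticGroup.mem_iff.mp hU.1]
    _ = J l ℂ * Uᵀ := by rw [← Matrix.mul_assoc, ← Matrix.mul_assoc, hunit, Matrix.one_mul]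

variable (A B : Matrix (l ⊕ l) (l ⊕ l) ℂ)

theorem trace_transpose_mul_mul_mul_of_mem (hU : U ∈ compactSymplecticGroup l) :
    (Uᵀ * A * U * B).trace = -(Uᴴ * (J l ℂ * A) * U * (B * J l ℂ)).trace := by
  symm
  calc -(Uᴴ * (J l ℂ * A) * U * (B * J l ℂ)).trace
      = -((Uᴴ * (J l ℂ * A) * U * B) * J l ℂ).trace := by simp only [Matrix.mul_assoc]
    _ = -(J l ℂ * (Uᴴ * J l ℂ) * A * U * B).trace := by
        rw [trace_mul_comm]; simp only [Matrix.mul_assoc]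
    _ = (Uᵀ * A * U * B).trace := by
        rw [conjTranspose_mul_J_of_mem_compactSymplecticGroup hU, ← Matrix.mul_assoc, J_squared]
        simp

theorem trace_mul_mul_mul_of_mem (hU : U ∈ compactSymplecticGroup l) :
    (U * A * U * B).trace = -(Uᴴᵀ * (J l ℂ * A) * U * (B * J l ℂ)).trace := by
  symm
  calc -(Uᴴᵀ * (J l ℂ * A) * U * (B * J l ℂ)).trace
      = -((Uᴴᵀ * (J l ℂ * A) * U * B) * J l ℂ).trace := by simp only [Matrix.mul_assoc]
    _ = -(J l ℂ * (Uᴴᵀ * J l ℂ) * A * U * B).trace := by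
        rw [trace_mul_comm]; simp only [Matrix.mul_assoc]
    _ = (U * A * U * B).trace := by
        rw [← J_mul_of_mem_compactSymplecticGroup hU, ← Matrix.mul_assoc, J_squared]
        simp

theorem trace_conjTranspose_mul_mul_conjTranspose_mul_of_mem
    (hU : U ∈ compactSymplecticGroup l) :
    (Uᴴ * A * Uᴴ * B).trace = -(Uᴴᵀ * (Aᵀ * J l ℂ) * U * (J l ℂ * Bᵀ)).trace := by
  symm
  calc -(Uᴴᵀ * (Aᵀ * J l ℂ) * U * (J l ℂ * Bᵀ)).trace
      = -(Uᴴᵀ * Aᵀ * (J l ℂ * U) * J l ℂ * Bᵀ).trace := by simp only [Matrix.mul_assoc]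
    _ = (Uᴴᵀ * Aᵀ * Uᴴᵀ * Bᵀ).trace := by
        rw [J_mul_of_mem_compactSymplecticGroup hU]
        simp only [← Matrix.mul_assoc]
        rw [Matrix.mul_assoc (Uᴴᵀ * Aᵀ * Uᴴᵀ), J_squared]
        simp
    _ = (Uᴴ * A * Uᴴ * B).trace := by
        rw [← trace_transpose, trace_mul_comm]
        simp only [transpose_mul, transpose_transpose, Matrix.mul_assoc]

end CompactSymplectic

section SecondMoments

variable {l : Type*} [Fintype l] [DecidableEq l]

structure IsSymplecticHaar (μ : Measure (Matrix (l ⊕ l) (l ⊕ l) ℂ)) : Prop where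
  ae_mem : ∀ᵐ U ∂μ, U ∈ compactSymplecticGroup l
  map_mul_left : ∀ S ∈ compactSymplecticGroup l, μ.map (S * ·) = μ

namespace IsSymplecticHaar

variable {μ : Measure (Matrix (l ⊕ l) (l ⊕ l) ℂ)}

theorem ae_mem_unitaryGroup (h : IsSymplecticHaar μ) : ∀ᵐ U ∂μ, U ∈ unitaryGroup (l ⊕ l) ℂ :=
  h.ae_mem.mono fun _ hU => hU.2

variable [IsProbabilityMeasure μ] (A B : Matrix (l ⊕ l) (l ⊕ l) ℂ)

theorem integral_mul_mul_conjTranspose (h : IsSymplecticHaar μ) (X : Matrix (l ⊕ l) (l ⊕ l) ℂ) :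
    ∫ U, U * X * Uᴴ ∂μ = (X.trace / (2 * Fintype.card l)) • 1 := by
  rw [Matrix.integral_mul_mul_conjTranspose h.ae_mem_unitaryGroup (fun _ hS => hS.2)
    h.map_mul_left (fun _ => mem_range_scalar_of_forall_compactSymplectic_commute),
    Fintype.card_sum, Nat.cast_add, two_mul]

theorem integral_transpose_mul_mul_conjTranspose (h : IsSymplecticHaar μ)
    (Y : Matrix (l ⊕ l) (l ⊕ l) ℂ) :
    ∫ U, Uᵀ * Y * Uᴴ ∂μ = (2 * Fintype.card l : ℂ)⁻¹ • Yᵀ := by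
  rw [Matrix.integral_transpose_mul_mul_conjTranspose h.ae_mem_unitaryGroup (fun _ hS => hS.2)
    h.map_mul_left (fun _ => mem_range_scalar_of_forall_compactSymplectic_commute),
    Fintype.card_sum, Nat.cast_add, two_mul]

theorem integral_trace_conjTranspose_mul_mul_mul (h : IsSymplecticHaar μ) :
    ∫ U, (Uᴴ * A * U * B).trace ∂μ = (1 / (2 * Fintype.card l)) * (A.trace * B.trace) := by
  have hint := integrable_mul_mul_conjTranspose h.ae_mem_unitaryGroup B
  calc ∫ U, (Uᴴ * A * U * B).trace ∂μ = ∫ U, (A * (U * B * Uᴴ)).trace ∂μ := by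
        congr 1 with U
        rw [Matrix.mul_assoc, Matrix.mul_assoc, trace_mul_comm]
        simp only [Matrix.mul_assoc]
    _ = (A * ∫ U, U * B * Uᴴ ∂μ).trace := by
        rw [← integral_const_mul_of_integrable hint, trace_integral (hint.const_mul A)]
    _ = (1 / (2 * Fintype.card l)) * (A.trace * B.trace) := by
        rw [h.integral_mul_mul_conjTranspose, Matrix.mul_smul, Matrix.mul_one, trace_smul,
          smul_eq_mul]
        ring

theorem integral_trace_conj_mul_mul_mul (h : IsSymplecticHaar μ) :
    ∫ U, (Uᴴᵀ * A * U * B).trace ∂μ = (1 / (2 * Fintype.card l)) * (A * Bᵀ).trace := by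
  have hint := integrable_transpose_mul_mul_conjTranspose h.ae_mem_unitaryGroup Aᵀ
  calc ∫ U, (Uᴴᵀ * A * U * B).trace ∂μ = ∫ U, (Bᵀ * (Uᵀ * Aᵀ * Uᴴ)).trace ∂μ := by
        congr 1 with U
        rw [← trace_transpose]
        simp only [transpose_mul, transpose_transpose, Matrix.mul_assoc]
    _ = (Bᵀ * ∫ U, Uᵀ * Aᵀ * Uᴴ ∂μ).trace := by
        rw [← integral_const_mul_of_integrable hint, trace_integral (hint.const_mul Bᵀ)]
    _ = (1 / (2 * Fintype.card l)) * (A * Bᵀ).trace := by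
        rw [h.integral_transpose_mul_mul_conjTranspose, transpose_transpose, Matrix.mul_smul,
          trace_smul, smul_eq_mul, trace_mul_comm, one_div]

theorem integral_trace_transpose_mul_mul_mul (h : IsSymplecticHaar μ) :
    ∫ U, (Uᵀ * A * U * B).trace ∂μ =
      (1 / (2 * Fintype.card l)) * ((J l ℂ * A).trace * ((J l ℂ)ᴴ * B).trace) := by
  rw [integral_congr_ae (h.ae_mem.mono fun U hU => trace_transpose_mul_mul_mul_of_mem A B hU),
    integral_neg, h.integral_trace_conjTranspose_mul_mul_mul, J_conjTranspose, Matrix.neg_mul,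
    trace_neg, trace_mul_comm B]
  ring

theorem integral_trace_mul_mul_mul (h : IsSymplecticHaar μ) :
    ∫ U, (U * A * U * B).trace ∂μ =
      (1 / (2 * Fintype.card l)) * (A * J l ℂ * Bᵀ * J l ℂ).trace := by
  rw [integral_congr_ae (h.ae_mem.mono fun U hU => trace_mul_mul_mul_of_mem A B hU),
    integral_neg, h.integral_trace_conj_mul_mul_mul, transpose_mul, J_transpose, Matrix.neg_mul,
    Matrix.mul_neg, trace_neg]
  have hcycle : (J l ℂ * A * (J l ℂ * Bᵀ)).trace = (A * J l ℂ * Bᵀ * J l ℂ).trace := by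
    rw [Matrix.mul_assoc, trace_mul_comm]
    simp only [Matrix.mul_assoc]
  rw [hcycle]
  ring

theorem integral_trace_conjTranspose_mul_mul_conjTranspose_mul (h : IsSymplecticHaar μ) :
    ∫ U, (Uᴴ * A * Uᴴ * B).trace ∂μ =
      (1 / (2 * Fintype.card l)) * (A * J l ℂ * Bᵀ * J l ℂ).trace := by
  rw [integral_congr_ae (h.ae_mem.mono fun U hU =>
      trace_conjTranspose_mul_mul_conjTranspose_mul_of_mem A B hU),
    integral_neg, h.integral_trace_conj_mul_mul_mul, transpose_mul, J_transpose,
    transpose_transpose, Matrix.mul_neg, Matrix.mul_neg, trace_neg]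
  have hcycle : (Aᵀ * J l ℂ * (B * J l ℂ)).trace = (A * J l ℂ * Bᵀ * J l ℂ).trace := by
    rw [← trace_transpose]
    simp only [transpose_mul, transpose_transpose, J_transpose, Matrix.neg_mul, Matrix.mul_neg,
      neg_neg, ← Matrix.mul_assoc]
    rw [trace_mul_comm]
    simp only [Matrix.mul_assoc]
  rw [hcycle]
  ring

end IsSymplecticHaar

end SecondMoments

end Matrix

/-- For any `2N×2N` complex matrices `A` and `B`, the averages over the compact symplectic
group `SP(2N)` (unitary matrices with `UᵗIU = I`) with respect to normalized Haar measure
satisfy `⟨Tr(U*AUB)⟩ = (1/(2N))·Tr(A)·Tr(B)`, `⟨Tr(UᵗAUB)⟩ = (1/(2N))·Tr(IA)·Tr(I*B)`,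
`⟨Tr(UAUB)⟩ = ⟨Tr(U*AU*B)⟩ = (1/(2N))·Tr(A·I·Bᵗ·I)` and `⟨Tr(ŪAUB)⟩ = (1/(2N))·Tr(A·Bᵗ)`. -/
theorem symplectic_second_moments (N : ℕ)
    (A B : Matrix (Fin N ⊕ Fin N) (Fin N ⊕ Fin N) ℂ)
    (μ : Measure (Matrix (Fin N ⊕ Fin N) (Fin N ⊕ Fin N) ℂ)) [IsProbabilityMeasure μ]
    (hmem : ∀ᵐ U ∂μ, Uᴴ * U = 1 ∧ Uᵀ * Imat N * U = Imat N)
    (hinv : ∀ S : Matrix (Fin N ⊕ Fin N) (Fin N ⊕ Fin N) ℂ,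
      Sᴴ * S = 1 → Sᵀ * Imat N * S = Imat N → μ.map (fun U => S * U) = μ) :
    (∫ U, (Uᴴ * A * U * B).trace ∂μ = (1 / (2 * (N : ℂ))) * (A.trace * B.trace)) ∧
    (∫ U, (Uᵀ * A * U * B).trace ∂μ =
      (1 / (2 * (N : ℂ))) * ((Imat N * A).trace * ((Imat N)ᴴ * B).trace)) ∧
    (∫ U, (U * A * U * B).trace ∂μ = (1 / (2 * (N : ℂ))) * (A * Imat N * Bᵀ * Imat N).trace) ∧
    (∫ U, (Uᴴ * A * Uᴴ * B).trace ∂μ =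
      (1 / (2 * (N : ℂ))) * (A * Imat N * Bᵀ * Imat N).trace) ∧
    (∫ U, (Uᴴᵀ * A * U * B).trace ∂μ = (1 / (2 * (N : ℂ))) * (A * Bᵀ).trace) := by
  have hJ : Imat N = J (Fin N) ℂ := rfl
  have h : IsSymplecticHaar μ :=
    ⟨hmem.mono fun _ hU => mem_compactSymplecticGroup_iff.mpr hU,
      fun S hS => hinv S (mem_compactSymplecticGroup_iff.mp hS).1
        (mem_compactSymplecticGroup_iff.mp hS).2⟩
  have hcard : Fintype.card (Fin N) = N := Fintype.card_fin N
  simp only [hJ]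
  refine ⟨?_, ?_, ?_, ?_, ?_⟩
  · simpa only [hcard] using h.integral_trace_conjTranspose_mul_mul_mul A B
  · simpa only [hcard] using h.integral_trace_transpose_mul_mul_mul A B
  · simpa only [hcard] using h.integral_trace_mul_mul_mul A B
  · simpa only [hcard] using h.integral_trace_conjTranspose_mul_mul_conjTranspose_mul A B
  · simpa only [hcard] using h.integral_trace_conj_mul_mul_mul A B
end

section
/- Let A and B be 2N×2N complex matrices, let Π₊ = diag(1,0) and Π₋ = diag(0,1) be the 2N×2N block projections with N×N identity/zero blocks, and let U range over the matrices of the block-diagonal form U = diag(V, V̄) with V drawn from the normalized Haar measure on U(N). Then the average satisfies ⟨Tr(U*AUB)⟩ = (1/N)·Tr(Π₊A)·Tr(Π₊B) + (1/N)·Tr(Π₋A)·Tr(Π₋B). -/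
open MeasureTheory Matrix

/-- The `2N×2N` block-diagonal matrix `diag(V, V̄)` built from an `N×N` matrix `V`. -/
def Ublk {N : ℕ} (V : Matrix (Fin N) (Fin N) ℂ) :
    Matrix (Fin N ⊕ Fin N) (Fin N ⊕ Fin N) ℂ :=
  Matrix.fromBlocks V 0 0 Vᴴᵀ

/-- The `2N×2N` block projection `Π₊ = diag(1, 0)`. -/
def PiPlus (N : ℕ) : Matrix (Fin N ⊕ Fin N) (Fin N ⊕ Fin N) ℂ :=
  Matrix.fromBlocks 1 0 0 0

/-- The `2N×2N` block projection `Π₋ = diag(0, 1)`. -/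
def PiMinus (N : ℕ) : Matrix (Fin N ⊕ Fin N) (Fin N ⊕ Fin N) ℂ :=
  Matrix.fromBlocks 0 0 0 1

/-!
Left invariance of `μ` under diagonal sign changes and permutations of the rows gives the second
moments of the entries, `∫ conj (V q p) * V r s ∂μ = δ_qr δ_ps / N`: a sign change of row `r`
kills the terms with `q ≠ r`, and the `N` rows contribute equally to `∑_q conj (V q p) * V q s =
(VᴴV)_ps = δ_ps`. Hence `∫ Tr(VᴴXVY) = Tr X · Tr Y / N`, and by transposition the same holds for
`Tr(VᵀXV̄Y)`. The block `diag(V, V̄)` splits `Tr(U*AUB)` into these two diagonal-block terms and two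
mixed terms `Tr(VᴴXV̄Y)`, `Tr(VᵀXVY)`, which change sign under `V ↦ iV` and so average to zero.
-/

open scoped ComplexConjugate

instance {m n α : Type*} [Countable m] [Countable n] [TopologicalSpace α] [MeasurableSpace α]
    [SecondCountableTopology α] [BorelSpace α] : BorelSpace (Matrix m n α) :=
  inferInstanceAs (BorelSpace (m → n → α))

namespace Matrix

theorem continuous_conj_entry_mul_entry {n : Type*} (q p r s : n) :
    Continuous fun V : Matrix n n ℂ => conj (V q p) * V r s := by
  fun_prop

theorem continuous_trace_mul_mul_mul_mul {n : Type*} [Fintype n]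
    {f g : Matrix n n ℂ → Matrix n n ℂ} (hf : Continuous f) (hg : Continuous g)
    (X Y : Matrix n n ℂ) :
    Continuous fun V => (f V * X * g V * Y).trace :=
  (((hf.matrix_mul continuous_const).matrix_mul hg).matrix_mul continuous_const).matrix_trace

variable {n : Type*} [Fintype n] [DecidableEq n]

theorem isCompact_unitaryGroup {𝕜 : Type*} [RCLike 𝕜] :
    IsCompact (unitaryGroup n 𝕜 : Set (Matrix n n 𝕜)) := by
  have hcube : IsCompact (Set.univ.pi fun _ : n => Set.univ.pi fun _ : n =>
      Metric.closedBall (0 : 𝕜) 1) :=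
    isCompact_univ_pi fun _ => isCompact_univ_pi fun _ => isCompact_closedBall 0 1
  refine hcube.of_isClosed_subset (isClosed_unitary (R := Matrix n n 𝕜)) fun U hU i _ j _ => ?_
  simpa using entry_norm_bound_of_unitary hU i j

theorem diagonal_mem_unitaryGroup {R : Type*} [CommRing R] [StarRing R] {d : n → R}
    (hd : ∀ k, d k * star (d k) = 1) : diagonal d ∈ unitaryGroup n R := by
  rw [mem_unitaryGroup_iff, star_eq_conjTranspose, diagonal_conjTranspose, diagonal_mul_diagonal]
  exact diagonal_eq_one.2 (funext hd)

theorem permMatrix_mem_unitaryGroup {R : Type*} [CommRing R] [StarRing R] (σ : Equiv.Perm n) :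
    σ.permMatrix R ∈ unitaryGroup n R := by
  rw [mem_unitaryGroup_iff', star_eq_conjTranspose, conjTranspose_permMatrix, ← permMatrix_mul,
    mul_inv_cancel, permMatrix_one]

variable {μ : Measure (Matrix n n ℂ)}

theorem integrable_of_ae_mem_unitaryGroup {E : Type*} [NormedAddCommGroup E] [IsFiniteMeasure μ]
    (hmem : ∀ᵐ V ∂μ, V ∈ unitaryGroup n ℂ) {f : Matrix n n ℂ → E} (hf : Continuous f) :
    Integrable f μ := by
  have h := hf.continuousOn.integrableOn_compact (μ := μ) isCompact_unitaryGroup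
  rwa [IntegrableOn, Measure.restrict_eq_self_of_ae_mem hmem] at h

theorem integral_comp_unitary_mul
    (hinv : ∀ S ∈ unitaryGroup n ℂ, μ.map (S * ·) = μ) {S : Matrix n n ℂ}
    (hS : S ∈ unitaryGroup n ℂ) {f : Matrix n n ℂ → ℂ} (hf : Continuous f) :
    ∫ V, f (S * V) ∂μ = ∫ V, f V ∂μ := by
  conv_rhs => rw [← hinv S hS]
  exact (integral_map (by fun_prop) hf.aestronglyMeasurable).symm

theorem integral_eq_zero_of_comp_unitary_mul_eq_neg
    (hinv : ∀ S ∈ unitaryGroup n ℂ, μ.map (S * ·) = μ) {S : Matrix n n ℂ}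
    (hS : S ∈ unitaryGroup n ℂ) {f : Matrix n n ℂ → ℂ} (hf : Continuous f)
    (hneg : ∀ V, f (S * V) = -f V) : ∫ V, f V ∂μ = 0 := by
  have h := integral_comp_unitary_mul hinv hS hf
  simp only [hneg, integral_neg] at h
  linear_combination -h / 2

theorem integral_eq_zero_of_comp_I_smul_eq_neg
    (hinv : ∀ S ∈ unitaryGroup n ℂ, μ.map (S * ·) = μ) {f : Matrix n n ℂ → ℂ} (hf : Continuous f)
    (hneg : ∀ V, f (Complex.I • V) = -f V) : ∫ V, f V ∂μ = 0 := by
  refine integral_eq_zero_of_comp_unitary_mul_eq_neg hinv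
    (diagonal_mem_unitaryGroup (d := fun _ => Complex.I) fun _ => ?_) hf fun V => ?_
  · simp
  · rw [← smul_one_eq_diagonal, smul_mul_assoc, one_mul, hneg]

theorem integral_conj_entry_mul_entry_of_ne
    (hinv : ∀ S ∈ unitaryGroup n ℂ, μ.map (S * ·) = μ) {q r : n} (hqr : q ≠ r) (p s : n) :
    ∫ V, conj (V q p) * V r s ∂μ = 0 := by
  let d : n → ℂ := fun k => if k = r then -1 else 1
  refine integral_eq_zero_of_comp_unitary_mul_eq_neg hinv (S := diagonal d)
    (diagonal_mem_unitaryGroup fun k => ?_) (continuous_conj_entry_mul_entry q p r s) fun V => ?_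
  · by_cases hk : k = r <;> simp [d, hk]
  · simp [d, diagonal_mul, hqr]

theorem integral_conj_entry_mul_entry_row_eq
    (hinv : ∀ S ∈ unitaryGroup n ℂ, μ.map (S * ·) = μ) (q q' p s : n) :
    ∫ V, conj (V q p) * V q s ∂μ = ∫ V, conj (V q' p) * V q' s ∂μ := by
  have h := integral_comp_unitary_mul hinv (permMatrix_mem_unitaryGroup (Equiv.swap q q'))
    (continuous_conj_entry_mul_entry q p q s)
  simpa [PEquiv.toMatrix_toPEquiv_mul] using h.symm

theorem integral_trace_conjTranspose_mul_mul_conj_mul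
    (hinv : ∀ S ∈ unitaryGroup n ℂ, μ.map (S * ·) = μ) (X Y : Matrix n n ℂ) :
    ∫ V, (Vᴴ * X * Vᴴᵀ * Y).trace ∂μ = 0 :=
  integral_eq_zero_of_comp_I_smul_eq_neg hinv (continuous_trace_mul_mul_mul_mul
    continuous_id.matrix_conjTranspose continuous_id.matrix_conjTranspose.matrix_transpose X Y)
    fun V => by simp [← mul_assoc]

theorem integral_trace_transpose_mul_mul_mul
    (hinv : ∀ S ∈ unitaryGroup n ℂ, μ.map (S * ·) = μ) (X Y : Matrix n n ℂ) :
    ∫ V, (Vᵀ * X * V * Y).trace ∂μ = 0 :=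
  integral_eq_zero_of_comp_I_smul_eq_neg hinv (continuous_trace_mul_mul_mul_mul
    continuous_id.matrix_transpose continuous_id X Y)
    fun V => by simp [← mul_assoc]

variable [IsProbabilityMeasure μ]

theorem integral_conj_entry_mul_entry_self
    (hmem : ∀ᵐ V ∂μ, V ∈ unitaryGroup n ℂ) (hinv : ∀ S ∈ unitaryGroup n ℂ, μ.map (S * ·) = μ)
    (q p s : n) :
    ∫ V, conj (V q p) * V q s ∂μ = (Fintype.card n : ℂ)⁻¹ * (1 : Matrix n n ℂ) p s := by
  have hsum : ∑ q' : n, ∫ V, conj (V q' p) * V q' s ∂μ = (1 : Matrix n n ℂ) p s := by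
    rw [← integral_finsetSum _ fun q' _ =>
      integrable_of_ae_mem_unitaryGroup hmem (continuous_conj_entry_mul_entry q' p q' s)]
    rw [integral_congr_ae (g := fun _ => (1 : Matrix n n ℂ) p s), integral_const, probReal_univ,
      one_smul]
    filter_upwards [hmem] with V hV
    rw [← (mem_unitaryGroup_iff'.1 hV), star_eq_conjTranspose, mul_apply]
    simp
  simp only [← integral_conj_entry_mul_entry_row_eq hinv q, Finset.sum_const, Finset.card_univ,
    nsmul_eq_mul] at hsum
  have hcard : (Fintype.card n : ℂ) ≠ 0 := Nat.cast_ne_zero.2 (Fintype.card_pos_iff.2 ⟨q⟩).ne'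
  rw [← hsum, inv_mul_cancel_left₀ hcard]

theorem integral_conjTranspose_mul_mul_apply
    (hmem : ∀ᵐ V ∂μ, V ∈ unitaryGroup n ℂ) (hinv : ∀ S ∈ unitaryGroup n ℂ, μ.map (S * ·) = μ)
    (X : Matrix n n ℂ) (p s : n) :
    ∫ V, (Vᴴ * X * V) p s ∂μ = (Fintype.card n : ℂ)⁻¹ * X.trace * (1 : Matrix n n ℂ) p s := by
  have hexpand : ∀ V : Matrix n n ℂ,
      (Vᴴ * X * V) p s = ∑ q, ∑ r, X q r * (conj (V q p) * V r s) := by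
    intro V
    simp only [mul_apply, conjTranspose_apply, RCLike.star_def, Finset.sum_mul]
    rw [Finset.sum_comm]
    exact Finset.sum_congr rfl fun _ _ => Finset.sum_congr rfl fun _ _ => by ring
  have hint : ∀ q r, Integrable (fun V : Matrix n n ℂ => X q r * (conj (V q p) * V r s)) μ :=
    fun q r => (integrable_of_ae_mem_unitaryGroup hmem
      (continuous_conj_entry_mul_entry q p r s)).const_mul _
  have hrow : ∀ q, ∫ V, ∑ r, X q r * (conj (V q p) * V r s) ∂μ
      = X q q * ((Fintype.card n : ℂ)⁻¹ * (1 : Matrix n n ℂ) p s) := by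
    intro q
    rw [integral_finsetSum _ fun r _ => hint q r, Finset.sum_eq_single q, integral_const_mul,
      integral_conj_entry_mul_entry_self hmem hinv]
    · intro r _ hrq
      rw [integral_const_mul, integral_conj_entry_mul_entry_of_ne hinv (Ne.symm hrq), mul_zero]
    · simp
  simp_rw [hexpand]
  rw [integral_finsetSum _ fun q _ => integrable_finsetSum _ fun r _ => hint q r]
  simp only [hrow, ← Finset.sum_mul, trace, diag_apply]
  ring

theorem integral_trace_conjTranspose_mul_mul_mul
    (hmem : ∀ᵐ V ∂μ, V ∈ unitaryGroup n ℂ) (hinv : ∀ S ∈ unitaryGroup n ℂ, μ.map (S * ·) = μ)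
    (X Y : Matrix n n ℂ) :
    ∫ V, (Vᴴ * X * V * Y).trace ∂μ = (Fintype.card n : ℂ)⁻¹ * (X.trace * Y.trace) := by
  have hint : ∀ p s, Integrable (fun V : Matrix n n ℂ => (Vᴴ * X * V) p s * Y s p) μ :=
    fun p s => (integrable_of_ae_mem_unitaryGroup hmem
      (((continuous_id.matrix_conjTranspose.matrix_mul continuous_const).matrix_mul
        continuous_id).matrix_elem p s)).mul_const _
  simp only [trace, diag_apply, mul_apply (M := _ * _ * _)]
  rw [integral_finsetSum _ fun p _ => integrable_finsetSum _ fun s _ => hint p s]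
  simp only [integral_finsetSum _ fun s _ => hint _ s, integral_mul_const,
    integral_conjTranspose_mul_mul_apply hmem hinv, one_apply, mul_ite, ite_mul, mul_one, mul_zero,
    zero_mul, Finset.sum_ite_eq, Finset.mem_univ, if_true, ← Finset.mul_sum]
  exact mul_assoc _ _ _

theorem integral_trace_transpose_mul_mul_conj_mul
    (hmem : ∀ᵐ V ∂μ, V ∈ unitaryGroup n ℂ) (hinv : ∀ S ∈ unitaryGroup n ℂ, μ.map (S * ·) = μ)
    (X Y : Matrix n n ℂ) :
    ∫ V, (Vᵀ * X * Vᴴᵀ * Y).trace ∂μ = (Fintype.card n : ℂ)⁻¹ * (X.trace * Y.trace) := by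
  have htranspose : ∀ V : Matrix n n ℂ,
      (Vᵀ * X * Vᴴᵀ * Y).trace = (Vᴴ * Xᵀ * V * Yᵀ).trace := by
    intro V
    rw [← trace_transpose]
    simp only [transpose_mul, transpose_transpose, Matrix.mul_assoc]
    rw [trace_mul_comm]
    simp only [Matrix.mul_assoc]
  simp only [htranspose, integral_trace_conjTranspose_mul_mul_mul hmem hinv, trace_transpose]

end Matrix

theorem trace_Ublk_conjTranspose_mul_mul_mul {N : ℕ} (V : Matrix (Fin N) (Fin N) ℂ)
    (A B : Matrix (Fin N ⊕ Fin N) (Fin N ⊕ Fin N) ℂ) :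
    ((Ublk V)ᴴ * A * Ublk V * B).trace =
      (Vᴴ * A.toBlocks₁₁ * V * B.toBlocks₁₁).trace
        + (Vᴴ * A.toBlocks₁₂ * Vᴴᵀ * B.toBlocks₂₁).trace
      + ((Vᵀ * A.toBlocks₂₁ * V * B.toBlocks₁₂).trace
        + (Vᵀ * A.toBlocks₂₂ * Vᴴᵀ * B.toBlocks₂₂).trace) := by
  have hconj : Vᴴᵀᴴ = Vᵀ := by ext; simp
  rw [← fromBlocks_toBlocks A, ← fromBlocks_toBlocks B]
  simp [Ublk, fromBlocks_conjTranspose, fromBlocks_multiply, hconj, trace, Fintype.sum_sum_type,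
    Finset.sum_add_distrib]

theorem trace_PiPlus_mul {N : ℕ} (A : Matrix (Fin N ⊕ Fin N) (Fin N ⊕ Fin N) ℂ) :
    (PiPlus N * A).trace = A.toBlocks₁₁.trace := by
  simp [PiPlus, trace, mul_apply, Fintype.sum_sum_type, one_apply, toBlocks₁₁]

theorem trace_PiMinus_mul {N : ℕ} (A : Matrix (Fin N ⊕ Fin N) (Fin N ⊕ Fin N) ℂ) :
    (PiMinus N * A).trace = A.toBlocks₂₂.trace := by
  simp [PiMinus, trace, mul_apply, Fintype.sum_sum_type, one_apply, toBlocks₂₂]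

/-- For `2N×2N` complex matrices `A`, `B`, averaging `Tr(U*AUB)` over the matrices
`U = diag(V, V̄)` with `V` Haar-distributed on `U(N)` gives
`(1/N)·Tr(Π₊A)·Tr(Π₊B) + (1/N)·Tr(Π₋A)·Tr(Π₋B)`. -/
theorem blockdiag_unitary_second_moment (N : ℕ)
    (A B : Matrix (Fin N ⊕ Fin N) (Fin N ⊕ Fin N) ℂ)
    (μ : Measure (Matrix (Fin N) (Fin N) ℂ)) [IsProbabilityMeasure μ]
    (hmem : ∀ᵐ V ∂μ, V ∈ Matrix.unitaryGroup (Fin N) ℂ)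
    (hinv : ∀ S ∈ Matrix.unitaryGroup (Fin N) ℂ, μ.map (fun V => S * V) = μ) :
    ∫ V, ((Ublk V)ᴴ * A * Ublk V * B).trace ∂μ =
      (1 / (N : ℂ)) * ((PiPlus N * A).trace * (PiPlus N * B).trace) +
      (1 / (N : ℂ)) * ((PiMinus N * A).trace * (PiMinus N * B).trace) := by
  have hV : Continuous fun V : Matrix (Fin N) (Fin N) ℂ => V := continuous_id
  have hint {f g : Matrix (Fin N) (Fin N) ℂ → Matrix (Fin N) (Fin N) ℂ} (hf : Continuous f)
      (hg : Continuous g) (X Y : Matrix (Fin N) (Fin N) ℂ) :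
      Integrable (fun V => (f V * X * g V * Y).trace) μ :=
    integrable_of_ae_mem_unitaryGroup hmem (continuous_trace_mul_mul_mul_mul hf hg X Y)
  have h₁₁ := hint hV.matrix_conjTranspose hV A.toBlocks₁₁ B.toBlocks₁₁
  have h₁₂ := hint hV.matrix_conjTranspose hV.matrix_conjTranspose.matrix_transpose
    A.toBlocks₁₂ B.toBlocks₂₁
  have h₂₁ := hint hV.matrix_transpose hV A.toBlocks₂₁ B.toBlocks₁₂
  have h₂₂ := hint hV.matrix_transpose hV.matrix_conjTranspose.matrix_transpose
    A.toBlocks₂₂ B.toBlocks₂₂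
  simp_rw [trace_Ublk_conjTranspose_mul_mul_mul]
  rw [integral_add ?_ ?_, integral_add h₁₁ h₁₂, integral_add h₂₁ h₂₂,
    integral_trace_conjTranspose_mul_mul_mul hmem hinv,
    integral_trace_conjTranspose_mul_mul_conj_mul hinv,
    integral_trace_transpose_mul_mul_mul hinv,
    integral_trace_transpose_mul_mul_conj_mul hmem hinv,
    trace_PiPlus_mul, trace_PiPlus_mul, trace_PiMinus_mul, trace_PiMinus_mul, Fintype.card_fin]
  · ring
  · exact h₁₁.add h₁₂
  · exact h₂₁.add h₂₂
end

section
/- Let T be a 2N×2N complex matrix satisfying I*·T̄·I = T, let λ ∈ ℂ and let v ∈ ℂ^{2N} be nonzero with Tv = λv. Then T·(I·v̄) = λ̄·(I·v̄), and the vectors v and I·v̄ are linearly independent over ℂ. Consequently, every real eigenvalue of such a matrix T has even geometric multiplicity (Kramers' degeneracy). -/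
open Matrix

lemma Imat_mul_Imat (N : ℕ) : Imat N * Imat N = -1 := by
  simp only [Imat, Matrix.fromBlocks_multiply]
  rw [← Matrix.fromBlocks_one, Matrix.fromBlocks_neg]
  norm_num

lemma Imat_conjTranspose (N : ℕ) : (Imat N)ᴴ = -Imat N := by
  simp only [Imat, Matrix.fromBlocks_conjTranspose]
  rw [Matrix.fromBlocks_neg]
  norm_num

lemma Imat_transpose (N : ℕ) : (Imat N)ᵀ = -Imat N := by
  simp only [Imat, Matrix.fromBlocks_transpose]
  rw [Matrix.fromBlocks_neg]
  norm_num

lemma Imat_conj (N : ℕ) : (Imat N)ᴴᵀ = Imat N := by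
  rw [Imat_conjTranspose, Matrix.transpose_neg, Imat_transpose, neg_neg]

lemma conj_mulVec {m : Type*} [Fintype m] (M : Matrix m m ℂ) (x : m → ℂ) :
    Mᴴᵀ *ᵥ (star x) = star (M *ᵥ x) := by
  rw [Matrix.star_mulVec, ← Matrix.mulVec_transpose]

lemma star_Imat_mulVec (N : ℕ) (x : Fin N ⊕ Fin N → ℂ) :
    star (Imat N *ᵥ star x) = Imat N *ᵥ x := by
  rw [← conj_mulVec, Imat_conj, star_star]

lemma theta_theta (N : ℕ) (x : Fin N ⊕ Fin N → ℂ) :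
    Imat N *ᵥ star (Imat N *ᵥ star x) = -x := by
  rw [star_Imat_mulVec, Matrix.mulVec_mulVec, Imat_mul_Imat, Matrix.neg_mulVec,
    Matrix.one_mulVec]

lemma theta_eig (N : ℕ) (T : Matrix (Fin N ⊕ Fin N) (Fin N ⊕ Fin N) ℂ)
    (hT : (Imat N)ᴴ * Tᴴᵀ * Imat N = T) (mu : ℂ) (x : Fin N ⊕ Fin N → ℂ)
    (hx : T *ᵥ x = mu • x) :
    T *ᵥ (Imat N *ᵥ star x) = (starRingEnd ℂ mu) • (Imat N *ᵥ star x) := by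
  have h2 : Imat N *ᵥ (Imat N *ᵥ star x) = -star x := by
    rw [Matrix.mulVec_mulVec, Imat_mul_Imat, Matrix.neg_mulVec, Matrix.one_mulVec]
  have h3 : Tᴴᵀ *ᵥ star x = (starRingEnd ℂ mu) • star x := by
    rw [conj_mulVec, hx, star_smul]
    rfl
  conv_lhs => rw [← hT]
  rw [← Matrix.mulVec_mulVec, ← Matrix.mulVec_mulVec, h2, Matrix.mulVec_neg, h3,
    Imat_conjTranspose, Matrix.neg_mulVec, Matrix.mulVec_neg, Matrix.mulVec_smul, neg_neg]

lemma star_dot {m : Type*} [Fintype m] (u w : m → ℂ) :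
    star (u ⬝ᵥ w) = star u ⬝ᵥ star w := by
  simp [dotProduct, star_sum, star_mul']

lemma ip_theta_theta (N : ℕ) (a b : Fin N ⊕ Fin N → ℂ) :
    star (Imat N *ᵥ star a) ⬝ᵥ (Imat N *ᵥ star b) = star (star a ⬝ᵥ b) := by
  rw [star_Imat_mulVec, Matrix.dotProduct_mulVec, ← Matrix.mulVec_transpose,
    Imat_transpose, Matrix.neg_mulVec, Matrix.mulVec_mulVec, Imat_mul_Imat,
    Matrix.neg_mulVec, Matrix.one_mulVec, neg_neg, star_dot, star_star,
    dotProduct_comm]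

lemma ip_self_theta (N : ℕ) (x : Fin N ⊕ Fin N → ℂ) :
    star x ⬝ᵥ (Imat N *ᵥ star x) = 0 := by
  have h : star x ⬝ᵥ (Imat N *ᵥ star x) = -(star x ⬝ᵥ (Imat N *ᵥ star x)) := by
    conv_lhs => rw [Matrix.dotProduct_mulVec, ← Matrix.mulVec_transpose, Imat_transpose,
      Matrix.neg_mulVec, neg_dotProduct, dotProduct_comm]
  linear_combination h / 2

/-- The bundled linear functional `x ↦ star w ⬝ᵥ x`. -/
noncomputable def ipL (N : ℕ) (w : Fin N ⊕ Fin N → ℂ) :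
    (Fin N ⊕ Fin N → ℂ) →ₗ[ℂ] ℂ where
  toFun x := star w ⬝ᵥ x
  map_add' x y := by simp [dotProduct_add]
  map_smul' c x := by simp [dotProduct_smul]

lemma even_aux (N : ℕ) : ∀ n : ℕ, ∀ E : Submodule ℂ (Fin N ⊕ Fin N → ℂ),
    (∀ x ∈ E, Imat N *ᵥ star x ∈ E) → Module.finrank ℂ E = n → Even n := by
  intro n
  induction n using Nat.strong_induction_on with
  | _ n IH =>
    intro E hE hrank
    rcases eq_or_ne E ⊥ with rfl | hne
    · rw [finrank_bot] at hrank
      simp [← hrank]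
    · obtain ⟨v, hvE, hv0⟩ := Submodule.exists_mem_ne_zero_of_ne_bot hne
      set w : Fin N ⊕ Fin N → ℂ := Imat N *ᵥ star v with hw
      have hwE : w ∈ E := hE v hvE
      set c : ℂ := star v ⬝ᵥ v with hcdef
      have hc : c ≠ 0 := by
        intro h
        apply hv0
        have hcast : ((∑ i, Complex.normSq (v i) : ℝ) : ℂ) = c := by
          push_cast
          simp [hcdef, dotProduct, Complex.normSq_eq_conj_mul_self]
        rw [h] at hcast
        have hsum : ∑ i, Complex.normSq (v i) = 0 := by exact_mod_cast hcast
        have hall := (Finset.sum_eq_zero_iff_of_nonneg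
          (fun i _ => Complex.normSq_nonneg (v i))).mp hsum
        funext i
        exact Complex.normSq_eq_zero.mp (hall i (Finset.mem_univ i))
      set f := ipL N v with hfdef
      set g := ipL N w with hgdef
      set φ := f.prod g with hφdef
      have hfv : f v = c := rfl
      have hfw : f w = 0 := ip_self_theta N v
      have hgv : g v = 0 := by
        show star w ⬝ᵥ v = 0
        rw [dotProduct_comm]
        have h := star_dot (star v) w
        rw [star_star] at h
        rw [← h, ip_self_theta, star_zero]
      have hgw : g w = star c := by
        show star w ⬝ᵥ w = star c
        rw [hw, ip_theta_theta]
      set E' := E ⊓ LinearMap.ker φ with hE'def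
      have hE'le : E' ≤ E := inf_le_left
      -- invariance of E'
      have hE'inv : ∀ x ∈ E', Imat N *ᵥ star x ∈ E' := by
        intro x hx
        obtain ⟨hxE, hxker⟩ := Submodule.mem_inf.mp hx
        have hφx : φ x = 0 := hxker
        have hfx : f x = 0 := congrArg Prod.fst hφx
        have hgx : g x = 0 := congrArg Prod.snd hφx
        refine Submodule.mem_inf.mpr ⟨hE x hxE, ?_⟩
        have hfθ : f (Imat N *ᵥ star x) = 0 := by
          show star v ⬝ᵥ (Imat N *ᵥ star x) = 0
          have hv' : star v = -star (Imat N *ᵥ star w) := by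
            rw [theta_theta, star_neg, neg_neg]
          rw [hv', neg_dotProduct, ip_theta_theta]
          have hgx' : star w ⬝ᵥ x = 0 := hgx
          rw [hgx', star_zero, neg_zero]
        have hgθ : g (Imat N *ᵥ star x) = 0 := by
          show star w ⬝ᵥ (Imat N *ᵥ star x) = 0
          rw [hw, ip_theta_theta]
          have hfx' : star v ⬝ᵥ x = 0 := hfx
          rw [hfx', star_zero]
        show φ (Imat N *ᵥ star x) = 0
        have : φ (Imat N *ᵥ star x) = (f (Imat N *ᵥ star x), g (Imat N *ᵥ star x)) := rfl
        rw [this, hfθ, hgθ]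
        rfl
      -- rank computation
      set ψ := φ.domRestrict E with hψdef
      have hψker : Module.finrank ℂ (LinearMap.ker ψ) = Module.finrank ℂ E' := by
        have h1 : LinearMap.ker ψ = E'.comap E.subtype := by
          ext x
          simp only [hψdef, LinearMap.mem_ker, LinearMap.domRestrict_apply,
            Submodule.mem_comap, hE'def, Submodule.mem_inf, Submodule.coe_subtype]
          exact ⟨fun h => ⟨x.2, h⟩, fun h => h.2⟩
        rw [h1]
        exact LinearEquiv.finrank_eq (Submodule.comapSubtypeEquivOfLe hE'le)
      have hrange : LinearMap.range ψ = ⊤ := by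
        rw [LinearMap.range_eq_top]
        rintro ⟨a, b⟩
        have hcs : star c ≠ 0 := star_ne_zero.mpr hc
        refine ⟨⟨(a / c) • v + (b / star c) • w,
          E.add_mem (E.smul_mem _ hvE) (E.smul_mem _ hwE)⟩, ?_⟩
        show φ ((a / c) • v + (b / star c) • w) = (a, b)
        have hval : φ ((a / c) • v + (b / star c) • w)
            = (a / c) • (f v, g v) + (b / star c) • (f w, g w) := by
          simp [hφdef, map_add, _root_.map_smul]
        rw [hval, hfv, hgv, hfw, hgw, Prod.ext_iff]
        constructor
        · show a / c * c + b / star c * 0 = a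
          rw [mul_zero, add_zero, div_mul_cancel₀ _ hc]
        · show a / c * 0 + b / star c * star c = b
          rw [mul_zero, zero_add, div_mul_cancel₀ _ hcs]
      have hrangerk : Module.finrank ℂ (LinearMap.range ψ) = 2 := by
        rw [hrange, finrank_top]
        simp [Module.finrank_prod]
      have hsum := LinearMap.finrank_range_add_finrank_ker ψ
      rw [hrank, hrangerk, hψker] at hsum
      set m := Module.finrank ℂ E' with hmdef
      have hmlt : m < n := by omega
      obtain ⟨k, hk⟩ := IH m hmlt E' hE'inv rfl
      exact ⟨k + 1, by omega⟩

/-- Let `T` be a `2N×2N` complex matrix with `I*·T̄·I = T`, and let `v ≠ 0` satisfy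
`Tv = λv`. Then `T·(I·v̄) = λ̄·(I·v̄)`, the vectors `v` and `I·v̄` are linearly independent,
and every real eigenvalue of `T` has even geometric multiplicity (Kramers' degeneracy). -/
theorem kramers_degeneracy (N : ℕ) (T : Matrix (Fin N ⊕ Fin N) (Fin N ⊕ Fin N) ℂ)
    (hT : (Imat N)ᴴ * Tᴴᵀ * Imat N = T) (lam : ℂ) (v : Fin N ⊕ Fin N → ℂ)
    (hv : v ≠ 0) (heig : T.mulVec v = lam • v) :
    T.mulVec ((Imat N).mulVec (star v)) =
        (starRingEnd ℂ lam) • (Imat N).mulVec (star v) ∧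
      LinearIndependent ℂ ![v, (Imat N).mulVec (star v)] ∧
      ∀ r : ℝ, Even (Module.finrank ℂ
        ↥(Module.End.eigenspace (Matrix.toLin' T) ((r : ℂ)))) := by
  refine ⟨theta_eig N T hT lam v heig, ?_, ?_⟩
  · rw [linearIndependent_fin2]
    simp only [Matrix.cons_val_zero, Matrix.cons_val_one, Matrix.head_cons]
    constructor
    · intro h0
      apply hv
      have hth := theta_theta N v
      rw [h0, star_zero, Matrix.mulVec_zero] at hth
      exact (neg_eq_zero.mp hth.symm)
    · intro a heq
      apply hv
      have hθv : Imat N *ᵥ star v = (-(star a)) • v := by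
        calc Imat N *ᵥ star v
            = Imat N *ᵥ star (a • (Imat N *ᵥ star v)) := by rw [heq]
          _ = star a • (Imat N *ᵥ star (Imat N *ᵥ star v)) := by
              rw [star_smul, Matrix.mulVec_smul]
          _ = star a • (-v) := by rw [theta_theta]
          _ = (-(star a)) • v := by rw [smul_neg, neg_smul]
      have h2 : v = (-(a * star a)) • v := by
        calc v = a • (Imat N *ᵥ star v) := heq.symm
          _ = a • ((-(star a)) • v) := by rw [hθv]
          _ = (-(a * star a)) • v := by rw [smul_smul, mul_neg]
      have h3 : (1 + a * star a) • v = 0 := by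
        have h2' := sub_eq_zero_of_eq h2
        rw [neg_smul, sub_neg_eq_add] at h2'
        rw [add_smul, one_smul]
        exact h2'
      have h4 : (1 + a * star a) = 0 := by
        rcases smul_eq_zero.mp h3 with h | h
        · exact h
        · exact absurd h hv
      exfalso
      have h5 : a * star a = (Complex.normSq a : ℂ) := Complex.mul_conj a
      rw [h5] at h4
      have h6 := congrArg Complex.re h4
      simp at h6
      have := Complex.normSq_nonneg a
      linarith
  · intro r
    apply even_aux N _ (Module.End.eigenspace (Matrix.toLin' T) ((r : ℂ)))
    · intro x hx
      rw [Module.End.mem_eigenspace_iff] at hx ⊢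
      rw [Matrix.toLin'_apply] at hx ⊢
      have hth := theta_eig N T hT ((r : ℂ)) x hx
      rwa [Complex.conj_ofReal] at hth
    · rfl
end

section
/- Let N ≤ M be positive integers and G = diag(1_N, −1_M) the (N+M)×(N+M) signature matrix. (a) Every complex linear subspace W of ℂ^{N+M} on which the Hermitian form v ↦ v*·G·v vanishes identically satisfies dim W ≤ N. (b) Consequently, for every (N+M)×(N+M) complex matrix T with T*·G·T = G, the sum of the generalized eigenspaces of T corresponding to eigenvalues of modulus strictly greater than 1 has dimension at most N; equivalently, T has at least M − N eigenvalues (counted with algebraic multiplicity) on the unit circle. -/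
/-! (a) On an isotropic subspace the projection to the first `N` coordinates is injective, because
a vector with vanishing first block has `v*Gv = -‖v‖²`.

(b) `T` preserves the form `(v, w) ↦ v*Gw`, so if `T v = λv + v'` and `T w = μw + w'` then
`v*Gw = conj λ μ · v*Gw` up to pairings of vectors of lower height. Hence generalized eigenvectors
for `λ`, `μ` with `conj λ · μ ≠ 1` are `G`-orthogonal. Any two eigenvalues outside the closed unit
disc qualify, so the sum of their generalized eigenspaces is isotropic and (a) applies. -/

open Matrix

/-- The `(N+M)×(N+M)` signature matrix `G = diag(1_N, −1_M)`. -/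
def Gmat (N M : ℕ) : Matrix (Fin N ⊕ Fin M) (Fin N ⊕ Fin M) ℂ :=
  Matrix.fromBlocks 1 0 0 (-1)

open LinearMap (ker)

section SesqForm

variable {K n : Type*} [CommRing K] [StarRing K] [Fintype n]

def Matrix.toSesqForm (G : Matrix n n K) : (n → K) →ₗ⋆[K] (n → K) →ₗ[K] K :=
  LinearMap.mk₂'ₛₗ (starRingEnd K) (RingHom.id K) (fun v w => star v ⬝ᵥ G *ᵥ w)
    (fun _ _ _ => by rw [star_add, add_dotProduct])
    (fun _ _ _ => by rw [star_smul, smul_dotProduct]; rfl)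
    (fun _ _ _ => by rw [mulVec_add, dotProduct_add])
    (fun _ _ _ => by rw [mulVec_smul, dotProduct_smul]; rfl)

@[simp]
theorem Matrix.toSesqForm_apply (G : Matrix n n K) (v w : n → K) :
    G.toSesqForm v w = star v ⬝ᵥ G *ᵥ w :=
  rfl

theorem Matrix.toSesqForm_toLin'_toLin' [DecidableEq n] {G T : Matrix n n K}
    (hT : Tᴴ * G * T = G) (v w : n → K) :
    G.toSesqForm (toLin' T v) (toLin' T w) = G.toSesqForm v w := by
  rw [toSesqForm_apply, toSesqForm_apply, toLin'_apply, toLin'_apply, star_mulVec,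
    mulVec_mulVec, dotProduct_mulVec, vecMul_vecMul, ← dotProduct_mulVec, ← Matrix.mul_assoc, hT]

end SesqForm

theorem Submodule.apply_eq_zero_of_mem_biSup {K R M ι : Type*} [CommSemiring K]
    [CommSemiring R] [AddCommMonoid M] [Module K M] {I₁ I₂ : K →+* R}
    {B : M →ₛₗ[I₁] M →ₛₗ[I₂] R} {s : Set ι} {p : ι → Submodule K M}
    (h : ∀ i ∈ s, ∀ j ∈ s, ∀ v ∈ p i, ∀ w ∈ p j, B v w = 0) :
    ∀ v ∈ ⨆ i ∈ s, p i, ∀ w ∈ ⨆ i ∈ s, p i, B v w = 0 := by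
  have hle : ⨆ i ∈ s, p i ≤ (⨆ i ∈ s, p i).orthogonalBilin B.flip :=
    iSup₂_le fun i hi v hv =>
      (iSup₂_le fun j hj w hw => h i hi j hj v hv w hw : ⨆ j ∈ s, p j ≤ ker (B v))
  exact fun v hv w hw => hle hv w hw

theorem apply_eq_zero_of_mem_ker_pow_sub_smul {K M : Type*} [Field K] [StarRing K]
    [AddCommGroup M] [Module K M] {B : M →ₗ⋆[K] M →ₗ[K] K} {T : Module.End K M}
    (hT : ∀ v w, B (T v) (T w) = B v w) {l m : K} (hlm : star l * m ≠ 1) {k j : ℕ} {v w : M}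
    (hv : v ∈ ker ((T - l • 1) ^ k)) (hw : w ∈ ker ((T - m • 1) ^ j)) : B v w = 0 := by
  induction k generalizing j v w with
  | zero => simp_all
  | succ k ihk =>
    induction j generalizing w with
    | zero => simp_all
    | succ j ihj =>
      set v' := (T - l • 1) v
      set w' := (T - m • 1) w
      have hv' : v' ∈ ker ((T - l • 1) ^ k) := by
        rwa [LinearMap.mem_ker, pow_succ, Module.End.mul_apply] at hv
      have hw' : w' ∈ ker ((T - m • 1) ^ j) := by
        rwa [LinearMap.mem_ker, pow_succ, Module.End.mul_apply] at hw
      have hTv : T v = l • v + v' := by simp [v']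
      have hTw : T w = m • w + w' := by simp [w']
      have key : B v w = star l * m * B v w := by
        calc B v w = B (T v) (T w) := (hT v w).symm
          _ = star l * m * B v w + star l * B v w' + m * B v' w + B v' w' := by
            rw [hTv, hTw]
            simp only [map_add, LinearMap.map_smulₛₗ, starRingEnd_apply, LinearMap.add_apply,
              LinearMap.smul_apply, smul_eq_mul, RingHom.id_apply]
            ring
          _ = star l * m * B v w := by rw [ihj hw', ihk hv' hw, ihk hv' hw']; ring
      have : (1 - star l * m) * B v w = 0 := by linear_combination key
      exact (mul_eq_zero.mp this).resolve_left (sub_ne_zero.mpr hlm.symm)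

theorem star_dotProduct_Gmat_mulVec {N M : ℕ} (v : Fin N ⊕ Fin M → ℂ) :
    star v ⬝ᵥ Gmat N M *ᵥ v =
      star (v ∘ Sum.inl) ⬝ᵥ (v ∘ Sum.inl) - star (v ∘ Sum.inr) ⬝ᵥ (v ∘ Sum.inr) := by
  rw [Gmat, fromBlocks_mulVec, ← Sum.elim_comp_inl_inr (star v), sumElim_dotProduct_sumElim]
  simp only [one_mulVec, zero_mulVec, add_zero, neg_mulVec, zero_add, dotProduct_neg,
    sub_eq_add_neg]
  rfl

open scoped ComplexOrder in
theorem finrank_le_of_isotropic {N M : ℕ} (W : Submodule ℂ (Fin N ⊕ Fin M → ℂ))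
    (hW : ∀ v ∈ W, star v ⬝ᵥ Gmat N M *ᵥ v = 0) : Module.finrank ℂ W ≤ N := by
  let π : W →ₗ[ℂ] Fin N → ℂ := (LinearMap.funLeft ℂ ℂ Sum.inl).comp W.subtype
  have hπ : Function.Injective π := by
    rw [← LinearMap.ker_eq_bot, LinearMap.ker_eq_bot']
    rintro ⟨v, hv⟩ hl
    replace hl : v ∘ Sum.inl = 0 := hl
    have hr : v ∘ Sum.inr = 0 := by
      simpa [star_dotProduct_Gmat_mulVec, hl, dotProduct_star_self_eq_zero] using hW v hv
    ext (i | j)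
    exacts [congrFun hl i, congrFun hr j]
  simpa using LinearMap.finrank_le_finrank_of_injective hπ

theorem isotropic_dim_le_and_hyperbolic_dim_le_general (N M : ℕ) :
    (∀ W : Submodule ℂ (Fin N ⊕ Fin M → ℂ),
      (∀ v ∈ W, star v ⬝ᵥ (Gmat N M).mulVec v = 0) → Module.finrank ℂ ↥W ≤ N) ∧
    (∀ T : Matrix (Fin N ⊕ Fin M) (Fin N ⊕ Fin M) ℂ, Tᴴ * Gmat N M * T = Gmat N M →
      Module.finrank ℂ
        ↥(⨆ lam ∈ {l : ℂ | 1 < ‖l‖},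
          LinearMap.ker (Matrix.toLin'
            ((T - lam • (1 : Matrix (Fin N ⊕ Fin M) (Fin N ⊕ Fin M) ℂ)) ^ (N + M)))) ≤ N) := by
  refine ⟨finrank_le_of_isotropic, fun T hT => finrank_le_of_isotropic _ fun v hv => ?_⟩
  refine Submodule.apply_eq_zero_of_mem_biSup (B := (Gmat N M).toSesqForm)
    (fun l (hl : 1 < ‖l‖) m (hm : 1 < ‖m‖) v hv w hw => ?_) v hv v hv
  have hlm : star l * m ≠ 1 := ne_of_apply_ne norm <| by
    rw [norm_mul, norm_star, norm_one]
    exact (one_lt_mul hl.le hm).ne'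
  simp only [toLin'_pow, map_sub, map_smul, toLin'_one] at hv hw
  exact apply_eq_zero_of_mem_ker_pow_sub_smul (toSesqForm_toLin'_toLin' hT) hlm hv hw

/-- (a) Every subspace of `ℂ^{N+M}` on which the Hermitian form `v ↦ v*·G·v` vanishes
identically has dimension at most `N`. (b) Consequently, for any `T` with `T*·G·T = G`,
the sum of the generalized eigenspaces of `T` for eigenvalues of modulus `> 1` has
dimension at most `N`. -/
theorem isotropic_dim_le_and_hyperbolic_dim_le (N M : ℕ) (hN : 0 < N) (hNM : N ≤ M) :
    (∀ W : Submodule ℂ (Fin N ⊕ Fin M → ℂ),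
      (∀ v ∈ W, star v ⬝ᵥ (Gmat N M).mulVec v = 0) → Module.finrank ℂ ↥W ≤ N) ∧
    (∀ T : Matrix (Fin N ⊕ Fin M) (Fin N ⊕ Fin M) ℂ, Tᴴ * Gmat N M * T = Gmat N M →
      Module.finrank ℂ
        ↥(⨆ lam ∈ {l : ℂ | 1 < ‖l‖},
          LinearMap.ker (Matrix.toLin'
            ((T - lam • (1 : Matrix (Fin N ⊕ Fin M) (Fin N ⊕ Fin M) ℂ)) ^ (N + M)))) ≤ N) :=
  isotropic_dim_le_and_hyperbolic_dim_le_general N M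
end

section
/- Let T be an invertible 2N×2N complex matrix. Then T satisfies both T*·I·T = I and J*·T·J = T if and only if T has the block-diagonal form T = diag(A, (A⁻¹)*) for some invertible N×N complex matrix A. Consequently the set of such matrices is a group isomorphic to GL(N, ℂ). -/
open Matrix

/-- The `2N×2N` matrix `J` with `N×N` blocks `(1, 0; 0, -1)`. -/
def Jmat (N : ℕ) : Matrix (Fin N ⊕ Fin N) (Fin N ⊕ Fin N) ℂ :=
  Matrix.fromBlocks 1 0 0 (-1)

/-- An invertible `2N×2N` complex matrix `T` satisfies both `T*·I·T = I` and `J*·T·J = T`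
if and only if `T = diag(A, (A⁻¹)*)` for some invertible `N×N` matrix `A`; hence the set of
such matrices is a group isomorphic to `GL(N, ℂ)`. -/
theorem chiral_transfer_matrix_group (N : ℕ)
    (T : Matrix (Fin N ⊕ Fin N) (Fin N ⊕ Fin N) ℂ) (hT : IsUnit T) :
    (Tᴴ * Imat N * T = Imat N ∧ (Jmat N)ᴴ * T * Jmat N = T) ↔
      ∃ A : Matrix (Fin N) (Fin N) ℂ, IsUnit A ∧ T = Matrix.fromBlocks A 0 0 (A⁻¹)ᴴ := by
  have hJ : (Jmat N)ᴴ = Jmat N := by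
    simp [Jmat, fromBlocks_conjTranspose]
  constructor
  · rintro ⟨h1, h2⟩
    set A := T.toBlocks₁₁ with hA
    set B := T.toBlocks₁₂ with hB
    set C := T.toBlocks₂₁ with hC
    set D := T.toBlocks₂₂ with hD
    have hTb : T = fromBlocks A B C D := (fromBlocks_toBlocks T).symm
    rw [hJ, hTb] at h2
    simp only [Jmat, fromBlocks_multiply, Matrix.mul_one, Matrix.one_mul,
      Matrix.mul_zero, Matrix.zero_mul, Matrix.mul_neg, Matrix.neg_mul,
      Matrix.mul_one, add_zero, zero_add, neg_neg] at h2
    have hB0 : B = 0 := by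
      have := (fromBlocks_inj.mp h2).2.1
      linear_combination (norm := module) (-(1:ℂ)/2) • this
    have hC0 : C = 0 := by
      have := (fromBlocks_inj.mp h2).2.2.1
      linear_combination (norm := module) (-(1:ℂ)/2) • this
    rw [hB0, hC0] at hTb
    rw [hTb, Imat] at h1
    simp only [fromBlocks_conjTranspose, fromBlocks_multiply, Matrix.mul_one,
      Matrix.one_mul, Matrix.mul_zero, Matrix.zero_mul, Matrix.mul_neg,
      Matrix.neg_mul, add_zero, zero_add, conjTranspose_zero] at h1
    obtain ⟨-, e12, e21, -⟩ := fromBlocks_inj.mp h1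
    have hAD : Aᴴ * D = 1 := by
      have := e12
      linear_combination (norm := module) (-(1:ℂ)) • this
    have hAunit : IsUnit A := by
      have : IsUnit Aᴴ := ⟨⟨Aᴴ, D, hAD, mul_eq_one_comm.mp hAD⟩, rfl⟩
      rw [isUnit_iff_isUnit_det] at this ⊢
      simpa [det_conjTranspose, isUnit_iff_ne_zero] using this
    refine ⟨A, hAunit, ?_⟩
    rw [hTb, conjTranspose_nonsing_inv, ← inv_eq_right_inv hAD]
  · rintro ⟨A, hA, rfl⟩
    have hA' : A⁻¹ * A = 1 := nonsing_inv_mul A (isUnit_iff_isUnit_det A |>.mp hA)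
    have hA'' : Aᴴ * (A⁻¹)ᴴ = 1 := by
      rw [← conjTranspose_mul, hA', conjTranspose_one]
    constructor
    · simp only [Imat, fromBlocks_conjTranspose, fromBlocks_multiply,
        conjTranspose_zero, Matrix.mul_zero, Matrix.zero_mul, Matrix.mul_neg,
        Matrix.neg_mul, Matrix.mul_one, Matrix.one_mul, add_zero, zero_add,
        conjTranspose_conjTranspose, neg_zero]
      rw [hA'', hA']
    · rw [hJ]
      simp [Jmat, fromBlocks_multiply]
end
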